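/- arXiv:2412.18468 — 4 statements merged into one kernel-verified Lean document; each statement's English description precedes it below -/
import Mathlib

section
/- Flattenings of a chaos of combinatorial type: for any subsets R, C ⊆ [q+2], letting 𝓡 = ∪_{t∈R} I_t and 𝓒 = ∪_{t∈C} I_t (viewed as subsets of [p]), one has ‖𝒜^{R→C}‖² = ( Π_{u ∈ [p]∖𝓡} S_u ) · ( Π_{u ∈ [p]∖𝓒} S_u ). -/
open MeasureTheory ProbabilityTheory Finset
open scoped ENNReal

noncomputable section

/-- Spectral (ℓ²→ℓ²) operator norm of a real matrix. -/
def specNorm {α β : Type*} [Fintype α] [Fintype β] [DecidableEq β] (M : Matrix α β ℝ) : ℝ :=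
  ‖LinearMap.toContinuousLinearMap (Matrix.toEuclideanLin M)‖

/-- The flattening `𝒜^{R→C}` of a tensor `𝒜` with coordinate index types `κ t`:
the matrix whose rows are indexed by tuples on `R`, columns by tuples on `C`, with entry
`(r, c)` equal to the sum of the entries of `𝒜` over all full index tuples restricting
to `r` on `R` and to `c` on `C`. -/
def flattenG {n : ℕ} (κ : Fin n → Type) [∀ t, Fintype (κ t)] [∀ t, DecidableEq (κ t)]
    (𝒜 : (∀ t, κ t) → ℝ) (R C : Finset (Fin n)) :
    Matrix (∀ t : {x // x ∈ R}, κ t.1) (∀ t : {x // x ∈ C}, κ t.1) ℝ :=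
  Matrix.of fun r c => ∑ i : ∀ t, κ t,
    if (∀ t : {x // x ∈ R}, i t.1 = r t) ∧ (∀ t : {x // x ∈ C}, i t.1 = c t) then 𝒜 i else 0

/-- Index type of the `t`-th coordinate of the coefficient tensor of a chaos of
combinatorial type: tuples in `Π_{j} [S_{idx t j}]`. -/
abbrev combIdx {p : ℕ} (S : Fin p → ℕ) {q : ℕ} (len : Fin (q + 2) → ℕ)
    (idx : ∀ t, Fin (len t) → Fin p) (t : Fin (q + 2)) : Type :=
  ∀ j : Fin (len t), Fin (S (idx t j))

/-- The coefficient tensor of a chaos of combinatorial type: the entry at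
`(w₁, …, w_{q+2})` counts the summation tuples `s ∈ [S₁] × ⋯ × [S_p]` with
`I_t(s) = w_t` for all `t`. -/
def combTensor {p : ℕ} (S : Fin p → ℕ) {q : ℕ} (len : Fin (q + 2) → ℕ)
    (idx : ∀ t, Fin (len t) → Fin p) (w : ∀ t, combIdx S len idx t) : ℝ :=
  ((Finset.univ.filter (fun s : ∀ u : Fin p, Fin (S u) =>
      ∀ t j, s (idx t j) = w t j)).card : ℝ)

/-- The coefficient tensor of a chaos of nearly combinatorial type with weight `f`:
the entry at `(w₁, …, w_{q+2})` is the sum of `f(s)` over the summation tuples `s` with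
`I_t(s) = w_t` for all `t`. -/
def combTensorW {p : ℕ} (S : Fin p → ℕ) {q : ℕ} (len : Fin (q + 2) → ℕ)
    (idx : ∀ t, Fin (len t) → Fin p) (f : (∀ u : Fin p, Fin (S u)) → ℝ)
    (w : ∀ t, combIdx S len idx t) : ℝ :=
  ∑ s ∈ Finset.univ.filter (fun s : ∀ u : Fin p, Fin (S u) =>
      ∀ t j, s (idx t j) = w t j), f s

section Aux

variable {p q : ℕ} {S : Fin p → ℕ} {len : Fin (q + 2) → ℕ} {idx : ∀ t, Fin (len t) → Fin p}

/-- `s` restricts to the tuple `w` on the coordinates of `T`. -/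
abbrev MatchOn (S : Fin p → ℕ) (len : Fin (q + 2) → ℕ) (idx : ∀ t, Fin (len t) → Fin p)
    (T : Finset (Fin (q + 2))) (s : ∀ u, Fin (S u))
    (w : ∀ t : {x // x ∈ T}, combIdx S len idx t.1) : Prop :=
  ∀ (t : {x // x ∈ T}) (j : Fin (len t.1)), s (idx t.1 j) = w t j

lemma matchOn_eq_on {T : Finset (Fin (q + 2))} {s s' : ∀ u, Fin (S u)}
    {w : ∀ t : {x // x ∈ T}, combIdx S len idx t.1}
    (hs : MatchOn S len idx T s w) (hs' : MatchOn S len idx T s' w) {u : Fin p}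
    (hu : u ∈ T.biUnion fun t => Finset.image (idx t) Finset.univ) : s u = s' u := by
  obtain ⟨t, ht, hu⟩ := Finset.mem_biUnion.mp hu
  obtain ⟨j, -, hj⟩ := Finset.mem_image.mp hu
  subst hj
  rw [hs ⟨t, ht⟩ j, hs' ⟨t, ht⟩ j]

lemma card_filter_matchOn {T : Finset (Fin (q + 2))}
    {w : ∀ t : {x // x ∈ T}, combIdx S len idx t.1} {s₀ : ∀ u, Fin (S u)}
    (h₀ : MatchOn S len idx T s₀ w) :
    (Finset.univ.filter fun s => MatchOn S len idx T s w).card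
      = ∏ u ∈ (T.biUnion fun t => Finset.image (idx t) Finset.univ)ᶜ, S u := by
  classical
  set 𝒯 := T.biUnion fun t => Finset.image (idx t) Finset.univ with h𝒯
  have := Finset.card_bij'
    (s := Finset.univ.filter fun s => MatchOn S len idx T s w)
    (t := (Finset.univ : Finset (∀ u : {x // x ∈ 𝒯ᶜ}, Fin (S u.1))))
    (fun s _ => fun u => s u.1)
    (fun g _ => fun u => if h : u ∈ 𝒯 then s₀ u else g ⟨u, Finset.mem_compl.mpr h⟩)
    (fun s hs => Finset.mem_univ _)
    (fun g hg => by
      simp only [Finset.mem_filter, Finset.mem_univ, true_and]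
      intro t j
      have h : idx t.1 j ∈ 𝒯 := Finset.mem_biUnion.mpr
        ⟨t.1, t.2, Finset.mem_image_of_mem _ (Finset.mem_univ j)⟩
      simp only []
      rw [dif_pos h, h₀ t j])
    (fun s hs => by
      funext u
      simp only []
      by_cases h : u ∈ 𝒯
      · rw [dif_pos h]
        exact matchOn_eq_on h₀ ((Finset.mem_filter.mp hs).2) h
      · rw [dif_neg h])
    (fun g hg => by
      funext u
      simp only []
      rw [dif_neg (Finset.mem_compl.mp u.2)])
  rw [this, Finset.card_univ, Fintype.card_pi]
  rw [← Finset.prod_coe_sort 𝒯ᶜ S]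
  exact Finset.prod_congr rfl fun u _ => Fintype.card_fin _

lemma card_filter_matchOn_le {T : Finset (Fin (q + 2))}
    {w : ∀ t : {x // x ∈ T}, combIdx S len idx t.1} :
    (Finset.univ.filter fun s => MatchOn S len idx T s w).card
      ≤ ∏ u ∈ (T.biUnion fun t => Finset.image (idx t) Finset.univ)ᶜ, S u := by
  classical
  by_cases h : ∃ s, MatchOn S len idx T s w
  · exact le_of_eq (card_filter_matchOn h.choose_spec)
  · rw [Finset.filter_false_of_mem (fun s _ hs => h ⟨s, hs⟩)]
    simp

lemma card_filter_exists (hS : ∀ u, 0 < S u) (T : Finset (Fin (q + 2))) :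
    (Finset.univ.filter fun w : ∀ t : {x // x ∈ T}, combIdx S len idx t.1 =>
        ∃ s, MatchOn S len idx T s w).card
      = ∏ u ∈ T.biUnion fun t => Finset.image (idx t) Finset.univ, S u := by
  classical
  set 𝒯 := T.biUnion fun t => Finset.image (idx t) Finset.univ with h𝒯
  have hmem : ∀ (t : {x // x ∈ T}) (j : Fin (len t.1)), idx t.1 j ∈ 𝒯 := fun t j =>
    Finset.mem_biUnion.mpr ⟨t.1, t.2, Finset.mem_image_of_mem _ (Finset.mem_univ j)⟩
  set pick : (∀ t : {x // x ∈ T}, combIdx S len idx t.1) → ∀ u, Fin (S u) := fun w =>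
    if h : ∃ s, MatchOn S len idx T s w then h.choose else fun u => ⟨0, hS u⟩ with hpickdef
  have hpick : ∀ w, (∃ s, MatchOn S len idx T s w) → MatchOn S len idx T (pick w) w := by
    intro w h
    simp only [hpickdef, dif_pos h]
    exact h.choose_spec
  have hex : ∀ g : ∀ u : {x // x ∈ 𝒯}, Fin (S u.1),
      ∃ s, MatchOn S len idx T s (fun t j => g ⟨idx t.1 j, hmem t j⟩) := by
    intro g
    refine ⟨fun u => if h : u ∈ 𝒯 then g ⟨u, h⟩ else ⟨0, hS u⟩, fun t j => ?_⟩
    simp only []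
    rw [dif_pos (hmem t j)]
  have := Finset.card_bij'
    (s := (Finset.univ : Finset (∀ u : {x // x ∈ 𝒯}, Fin (S u.1))))
    (t := Finset.univ.filter fun w : ∀ t : {x // x ∈ T}, combIdx S len idx t.1 =>
        ∃ s, MatchOn S len idx T s w)
    (fun g _ => fun t j => g ⟨idx t.1 j, hmem t j⟩)
    (fun w _ => fun u => pick w u.1)
    (fun g _ => by
      simp only [Finset.mem_filter, Finset.mem_univ, true_and]
      exact hex g)
    (fun w hw => Finset.mem_univ _)
    (fun g hg => by
      funext u
      obtain ⟨u, hu⟩ := u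
      obtain ⟨t, ht, hu2⟩ := Finset.mem_biUnion.mp hu
      obtain ⟨j, -, hj⟩ := Finset.mem_image.mp hu2
      subst hj
      exact hpick _ (hex g) ⟨t, ht⟩ j)
    (fun w hw => by
      funext t j
      simp only []
      exact hpick w (Finset.mem_filter.mp hw).2 t j)
  rw [← this, Finset.card_univ, Fintype.card_pi, ← Finset.prod_coe_sort 𝒯 S]
  exact Finset.prod_congr rfl fun u _ => Fintype.card_fin _

lemma sum_card_matchOn (T₁ T₂ : Finset (Fin (q + 2)))
    (w₂ : ∀ t : {x // x ∈ T₂}, combIdx S len idx t.1) :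
    ∑ w₁ : ∀ t : {x // x ∈ T₁}, combIdx S len idx t.1,
      (Finset.univ.filter fun s =>
        MatchOn S len idx T₁ s w₁ ∧ MatchOn S len idx T₂ s w₂).card
      = (Finset.univ.filter fun s => MatchOn S len idx T₂ s w₂).card := by
  classical
  have h := Finset.card_eq_sum_card_fiberwise
    (s := Finset.univ.filter fun s => MatchOn S len idx T₂ s w₂)
    (t := (Finset.univ : Finset (∀ t : {x // x ∈ T₁}, combIdx S len idx t.1)))
    (f := fun s => fun (t : {x // x ∈ T₁}) (j : Fin (len t.1)) => s (idx t.1 j))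
    (fun s _ => Finset.mem_univ _)
  rw [h]
  refine Finset.sum_congr rfl fun w₁ _ => ?_
  congr 1
  rw [Finset.filter_filter]
  refine Finset.filter_congr fun s _ => ?_
  simp only [funext_iff, MatchOn]
  tauto

lemma flattenG_entry (R C : Finset (Fin (q + 2)))
    (r : ∀ t : {x // x ∈ R}, combIdx S len idx t.1)
    (c : ∀ t : {x // x ∈ C}, combIdx S len idx t.1) :
    flattenG (combIdx S len idx) (combTensor S len idx) R C r c
      = ((Finset.univ.filter fun s =>
          MatchOn S len idx R s r ∧ MatchOn S len idx C s c).card : ℝ) := by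
  classical
  have hcast : flattenG (combIdx S len idx) (combTensor S len idx) R C r c
      = ((∑ i : ∀ t, combIdx S len idx t,
          if (∀ t : {x // x ∈ R}, i t.1 = r t) ∧ (∀ t : {x // x ∈ C}, i t.1 = c t)
          then (Finset.univ.filter fun s : ∀ u, Fin (S u) =>
            ∀ t j, s (idx t j) = i t j).card else 0 : ℕ) : ℝ) := by
    rw [flattenG, Matrix.of_apply, Nat.cast_sum]
    refine Finset.sum_congr rfl fun i _ => ?_
    rw [combTensor]
    split_ifs <;> simp
  rw [hcast]
  congr 1
  calc ∑ i : ∀ t, combIdx S len idx t,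
        (if (∀ t : {x // x ∈ R}, i t.1 = r t) ∧ (∀ t : {x // x ∈ C}, i t.1 = c t)
          then (Finset.univ.filter fun s : ∀ u, Fin (S u) =>
            ∀ t j, s (idx t j) = i t j).card else 0)
      = ∑ i : ∀ t, combIdx S len idx t, ∑ s : ∀ u, Fin (S u),
          (if (∀ t : {x // x ∈ R}, i t.1 = r t) ∧ (∀ t : {x // x ∈ C}, i t.1 = c t)
            then (if ∀ t j, s (idx t j) = i t j then 1 else 0) else 0) := by
        refine Finset.sum_congr rfl fun i _ => ?_
        split_ifs with h
        · rw [Finset.card_filter]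
        · simp
    _ = ∑ s : ∀ u, Fin (S u), ∑ i : ∀ t, combIdx S len idx t,
          (if (∀ t : {x // x ∈ R}, i t.1 = r t) ∧ (∀ t : {x // x ∈ C}, i t.1 = c t)
            then (if ∀ t j, s (idx t j) = i t j then 1 else 0) else 0) := Finset.sum_comm
    _ = ∑ s : ∀ u, Fin (S u),
          (if MatchOn S len idx R s r ∧ MatchOn S len idx C s c then 1 else 0) := by
        refine Finset.sum_congr rfl fun s _ => ?_
        rw [Finset.sum_eq_single (fun t => fun j => s (idx t j))]
        · rw [if_pos (show ∀ t j, s (idx t j) = (fun t j => s (idx t j)) t j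
            from fun _ _ => rfl)]
          refine if_congr ?_ rfl rfl
          simp only [funext_iff, MatchOn]
        · intro i _ hne
          split_ifs with h1 h2
          · exact absurd (by funext t j; exact (h2 t j).symm) hne
          · rfl
          · rfl
        · intro h
          exact absurd (Finset.mem_univ _) h
    _ = (Finset.univ.filter fun s =>
          MatchOn S len idx R s r ∧ MatchOn S len idx C s c).card :=
        (Finset.card_filter _ _).symm

end Aux

lemma euclidean_norm_sq {ι : Type} [Fintype ι] (y : EuclideanSpace ℝ ι) :
    ‖y‖ ^ 2 = ∑ i, y i ^ 2 := by
  rw [EuclideanSpace.norm_eq, Real.sq_sqrt (by positivity)]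
  simp [sq_abs]

/-- norms of flattenings of a chaos of combinatorial type. -/
theorem flattening_combinatorial (p q : ℕ) (hp : 0 < p) (hq : 0 < q)
    (S : Fin p → ℕ) (hS : ∀ u, 0 < S u) (len : Fin (q + 2) → ℕ)
    (idx : ∀ t, Fin (len t) → Fin p) (hinj : ∀ t, Function.Injective (idx t))
    (R C : Finset (Fin (q + 2))) :
    specNorm (flattenG (combIdx S len idx) (combTensor S len idx) R C) ^ 2 =
      (∏ u ∈ (R.biUnion fun t => Finset.image (idx t) Finset.univ)ᶜ, (S u : ℝ)) *
      (∏ u ∈ (C.biUnion fun t => Finset.image (idx t) Finset.univ)ᶜ, (S u : ℝ)) := by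
  classical
  set 𝓡 := R.biUnion fun t => Finset.image (idx t) Finset.univ with h𝓡
  set 𝓒 := C.biUnion fun t => Finset.image (idx t) Finset.univ with h𝓒
  set M := flattenG (combIdx S len idx) (combTensor S len idx) R C with hM
  set A : ℝ := ∏ u ∈ 𝓡ᶜ, (S u : ℝ) with hA
  set B : ℝ := ∏ u ∈ 𝓒ᶜ, (S u : ℝ) with hB
  have hAcast : A = ((∏ u ∈ 𝓡ᶜ, S u : ℕ) : ℝ) := by rw [Nat.cast_prod]
  have hBcast : B = ((∏ u ∈ 𝓒ᶜ, S u : ℕ) : ℝ) := by rw [Nat.cast_prod]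
  have hApos : 0 < A := Finset.prod_pos fun u _ => by exact_mod_cast hS u
  have hBpos : 0 < B := Finset.prod_pos fun u _ => by exact_mod_cast hS u
  have hABnn : 0 ≤ A * B := le_of_lt (mul_pos hApos hBpos)
  -- entries
  have hMnn : ∀ r c, 0 ≤ M r c := fun r c => by
    rw [hM, flattenG_entry]; exact Nat.cast_nonneg _
  -- exact row sums
  have hrowsum : ∀ r, ∑ c, M r c
      = ((Finset.univ.filter fun s => MatchOn S len idx R s r).card : ℝ) := by
    intro r
    have h1 : ∑ c, M r c = ((∑ c : ∀ t : {x // x ∈ C}, combIdx S len idx t.1,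
        (Finset.univ.filter fun s =>
          MatchOn S len idx R s r ∧ MatchOn S len idx C s c).card : ℕ) : ℝ) := by
      rw [Nat.cast_sum]
      exact Finset.sum_congr rfl fun c _ => flattenG_entry R C r c
    rw [h1]
    congr 1
    rw [← sum_card_matchOn C R r]
    refine Finset.sum_congr rfl fun c _ => ?_
    congr 1
    exact Finset.filter_congr fun s _ => and_comm
  have hrow : ∀ r, ∑ c, M r c ≤ A := by
    intro r
    rw [hrowsum, hAcast]
    exact_mod_cast card_filter_matchOn_le
  -- column sums
  have hcol : ∀ c, ∑ r, M r c ≤ B := by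
    intro c
    have h1 : ∑ r, M r c = ((∑ r : ∀ t : {x // x ∈ R}, combIdx S len idx t.1,
        (Finset.univ.filter fun s =>
          MatchOn S len idx R s r ∧ MatchOn S len idx C s c).card : ℕ) : ℝ) := by
      rw [Nat.cast_sum]
      exact Finset.sum_congr rfl fun r _ => flattenG_entry R C r c
    rw [h1, sum_card_matchOn R C c, hBcast]
    exact_mod_cast card_filter_matchOn_le
  set T := LinearMap.toContinuousLinearMap (Matrix.toEuclideanLin M) with hT
  have happly : ∀ (x : EuclideanSpace ℝ (∀ t : {x // x ∈ C}, combIdx S len idx t.1))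
      (r : ∀ t : {x // x ∈ R}, combIdx S len idx t.1),
      T x r = ∑ c, M r c * x c := fun x r => rfl
  -- upper bound
  have hub : ‖T‖ ≤ Real.sqrt (A * B) := by
    refine ContinuousLinearMap.opNorm_le_bound _ (Real.sqrt_nonneg _) fun x => ?_
    have h1 : ‖T x‖ ^ 2 ≤ A * B * ‖x‖ ^ 2 := by
      rw [euclidean_norm_sq, euclidean_norm_sq]
      have hterm : ∀ r, (T x r) ^ 2 ≤ A * ∑ c, M r c * x c ^ 2 := by
        intro r
        rw [happly]
        have hcs := Finset.sum_mul_sq_le_sq_mul_sq Finset.univ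
          (fun c => Real.sqrt (M r c)) (fun c => Real.sqrt (M r c) * x c)
        have e1 : ∀ c, Real.sqrt (M r c) * (Real.sqrt (M r c) * x c) = M r c * x c := by
          intro c
          rw [← mul_assoc, Real.mul_self_sqrt (hMnn r c)]
        have e2 : ∀ c, Real.sqrt (M r c) ^ 2 = M r c := fun c => Real.sq_sqrt (hMnn r c)
        have e3 : ∀ c, (Real.sqrt (M r c) * x c) ^ 2 = M r c * x c ^ 2 := by
          intro c
          rw [mul_pow, e2]
        simp only [e1, e2, e3] at hcs
        calc (∑ c, M r c * x c) ^ 2 ≤ (∑ c, M r c) * ∑ c, M r c * x c ^ 2 := hcs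
          _ ≤ A * ∑ c, M r c * x c ^ 2 := by
              refine mul_le_mul_of_nonneg_right (hrow r) ?_
              exact Finset.sum_nonneg fun c _ => mul_nonneg (hMnn r c) (sq_nonneg _)
      calc ∑ r, (T x r) ^ 2 ≤ ∑ r, A * ∑ c, M r c * x c ^ 2 :=
            Finset.sum_le_sum fun r _ => hterm r
        _ = A * ∑ c, (∑ r, M r c) * x c ^ 2 := by
            rw [← Finset.mul_sum, Finset.sum_comm]
            congr 1
            exact Finset.sum_congr rfl fun c _ => (Finset.sum_mul _ _ _).symm
        _ ≤ A * ∑ c, B * x c ^ 2 := by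
            refine mul_le_mul_of_nonneg_left ?_ (le_of_lt hApos)
            exact Finset.sum_le_sum fun c _ =>
              mul_le_mul_of_nonneg_right (hcol c) (sq_nonneg _)
        _ = A * B * ∑ c, x c ^ 2 := by rw [← Finset.mul_sum, mul_assoc]
    have h2 : Real.sqrt (A * B) * ‖x‖ = Real.sqrt (A * B * ‖x‖ ^ 2) := by
      rw [Real.sqrt_mul hABnn, Real.sqrt_sq (norm_nonneg _)]
    rw [h2]
    exact (Real.le_sqrt (norm_nonneg _) (by positivity)).mpr h1
  -- lower bound
  set v : EuclideanSpace ℝ (∀ t : {x // x ∈ C}, combIdx S len idx t.1) :=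
    (WithLp.equiv 2 _).symm
      (fun c => if ∃ s, MatchOn S len idx C s c then (1 : ℝ) else 0) with hv
  have hvapp : ∀ c, v c = if ∃ s, MatchOn S len idx C s c then (1 : ℝ) else 0 :=
    fun c => rfl
  have hTv : ∀ r, T v r
      = ((Finset.univ.filter fun s => MatchOn S len idx R s r).card : ℝ) := by
    intro r
    rw [happly, ← hrowsum]
    refine Finset.sum_congr rfl fun c _ => ?_
    rw [hvapp]
    by_cases h : ∃ s, MatchOn S len idx C s c
    · rw [if_pos h, mul_one]
    · rw [if_neg h, mul_zero]
      have : M r c = 0 := by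
        rw [hM, flattenG_entry]
        rw [Finset.filter_false_of_mem (fun s _ hs => h ⟨s, hs.2⟩)]
        simp
      rw [this]
  have hnv : ‖v‖ ^ 2 = ((∏ u ∈ 𝓒, S u : ℕ) : ℝ) := by
    rw [euclidean_norm_sq, ← card_filter_exists (S := S) (len := len) (idx := idx) hS C,
      ← Finset.sum_boole]
    push_cast
    refine Finset.sum_congr rfl fun c _ => ?_
    rw [hvapp]
    split_ifs <;> norm_num
  have hnTv : ‖T v‖ ^ 2 = A ^ 2 * ((∏ u ∈ 𝓡, S u : ℕ) : ℝ) := by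
    rw [euclidean_norm_sq, ← card_filter_exists (S := S) (len := len) (idx := idx) hS R,
      ← Finset.sum_boole]
    push_cast
    rw [Finset.mul_sum]
    refine Finset.sum_congr rfl fun r _ => ?_
    rw [hTv]
    by_cases h : ∃ s, MatchOn S len idx R s r
    · rw [if_pos h, card_filter_matchOn h.choose_spec, ← hAcast]
      ring
    · rw [if_neg h, Finset.filter_false_of_mem (fun s _ hs => h ⟨s, hs⟩)]
      norm_num
  have hPr : A * ((∏ u ∈ 𝓡, S u : ℕ) : ℝ) = ∏ u, (S u : ℝ) := by
    rw [Nat.cast_prod, hA, mul_comm]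
    exact Finset.prod_mul_prod_compl 𝓡 _
  have hPc : B * ((∏ u ∈ 𝓒, S u : ℕ) : ℝ) = ∏ u, (S u : ℝ) := by
    rw [Nat.cast_prod, hB, mul_comm]
    exact Finset.prod_mul_prod_compl 𝓒 _
  have hPcpos : (0:ℝ) < ((∏ u ∈ 𝓒, S u : ℕ) : ℝ) := by
    rw [Nat.cast_prod]
    exact Finset.prod_pos fun u _ => by exact_mod_cast hS u
  have hlb : A * B ≤ ‖T‖ ^ 2 := by
    have h1 : ‖T v‖ ≤ ‖T‖ * ‖v‖ := T.le_opNorm v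
    have h2 : ‖T v‖ ^ 2 ≤ ‖T‖ ^ 2 * ‖v‖ ^ 2 := by
      rw [← mul_pow]
      exact pow_le_pow_left₀ (norm_nonneg _) h1 2
    rw [hnTv, hnv] at h2
    have h3 : A ^ 2 * ((∏ u ∈ 𝓡, S u : ℕ) : ℝ)
        = (A * B) * ((∏ u ∈ 𝓒, S u : ℕ) : ℝ) := by
      have : A * (A * ((∏ u ∈ 𝓡, S u : ℕ) : ℝ))
          = A * (B * ((∏ u ∈ 𝓒, S u : ℕ) : ℝ)) := by rw [hPr, hPc]
      calc A ^ 2 * ((∏ u ∈ 𝓡, S u : ℕ) : ℝ)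
          = A * (A * ((∏ u ∈ 𝓡, S u : ℕ) : ℝ)) := by ring
        _ = A * (B * ((∏ u ∈ 𝓒, S u : ℕ) : ℝ)) := this
        _ = (A * B) * ((∏ u ∈ 𝓒, S u : ℕ) : ℝ) := by ring
    rw [h3] at h2
    exact le_of_mul_le_mul_right h2 hPcpos
  have hub2 : ‖T‖ ^ 2 ≤ A * B := by
    calc ‖T‖ ^ 2 ≤ Real.sqrt (A * B) ^ 2 := pow_le_pow_left₀ (norm_nonneg _) hub 2
      _ = A * B := Real.sq_sqrt hABnn
  have : specNorm M = ‖T‖ := rfl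
  rw [this]
  exact le_antisymm hub2 hlb

end
end

section
/- Flattenings of a chaos of nearly combinatorial type: for any subsets R, C ⊆ [q+2], letting 𝓡 = ∪_{t∈R} I_t and 𝓒 = ∪_{t∈C} I_t (viewed as subsets of [p]), one has ‖(𝒜^f)^{R→C}‖² ≤ ‖f‖_∞² · ( Π_{u ∈ [p]∖𝓡} S_u ) · ( Π_{u ∈ [p]∖𝓒} S_u ), where ‖f‖_∞ = max_s |f(s)|. -/
open MeasureTheory ProbabilityTheory Finset
open scoped ENNReal

noncomputable section

lemma flattenG_symm {n : ℕ} (κ : Fin n → Type) [∀ t, Fintype (κ t)] [∀ t, DecidableEq (κ t)]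
    (𝒜 : (∀ t, κ t) → ℝ) (R C : Finset (Fin n)) (r : ∀ t : {x // x ∈ R}, κ t.1)
    (c : ∀ t : {x // x ∈ C}, κ t.1) :
    flattenG κ 𝒜 R C r c = flattenG κ 𝒜 C R c r := by
  simp only [flattenG, Matrix.of_apply]
  exact Finset.sum_congr rfl fun i _ => if_congr and_comm rfl rfl

lemma specNorm_sq_le_schur {α β : Type*} [Fintype α] [Fintype β] [DecidableEq β]
    (M : Matrix α β ℝ) {A B : ℝ} (hA : 0 ≤ A) (hB : 0 ≤ B)
    (hrow : ∀ r, ∑ c, |M r c| ≤ A) (hcol : ∀ c, ∑ r, |M r c| ≤ B) :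
    specNorm M ^ 2 ≤ A * B := by
  have hAB : 0 ≤ A * B := mul_nonneg hA hB
  have happ : ∀ x : EuclideanSpace ℝ β, ∀ r,
      (LinearMap.toContinuousLinearMap (Matrix.toEuclideanLin M)) x r = ∑ c, M r c * x c := by
    intro x r
    rfl
  have hbound : specNorm M ≤ Real.sqrt (A * B) := by
    apply ContinuousLinearMap.opNorm_le_bound _ (Real.sqrt_nonneg _)
    intro x
    have key : ∑ r, (∑ c, M r c * x c) ^ 2 ≤ A * B * ∑ c, (x c) ^ 2 := by
      have step1 : ∀ r, (∑ c, M r c * x c) ^ 2 ≤ A * ∑ c, |M r c| * (x c) ^ 2 := by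
        intro r
        have h1 : (∑ c, M r c * x c) ^ 2 ≤ (∑ c, |M r c * x c|) ^ 2 := by
          have := Finset.abs_sum_le_sum_abs (fun c => M r c * x c) univ
          calc (∑ c, M r c * x c) ^ 2 = |∑ c, M r c * x c| ^ 2 := (sq_abs _).symm
            _ ≤ (∑ c, |M r c * x c|) ^ 2 :=
                pow_le_pow_left₀ (abs_nonneg _) this 2
        have h2 : (∑ c, |M r c * x c|) ^ 2 ≤ (∑ c, |M r c|) * ∑ c, |M r c| * (x c) ^ 2 := by
          apply Finset.sum_sq_le_sum_mul_sum_of_sq_eq_mul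
          · intro i _; exact abs_nonneg _
          · intro i _; positivity
          · intro i _
            rw [abs_mul, mul_pow, sq_abs (x i)]
            ring
        have h3 : (∑ c, |M r c|) * (∑ c, |M r c| * (x c) ^ 2) ≤ A * ∑ c, |M r c| * (x c) ^ 2 := by
          apply mul_le_mul_of_nonneg_right (hrow r)
          positivity
        exact le_trans h1 (le_trans h2 h3)
      calc ∑ r, (∑ c, M r c * x c) ^ 2 ≤ ∑ r, A * ∑ c, |M r c| * (x c) ^ 2 :=
            Finset.sum_le_sum fun r _ => step1 r
        _ = A * ∑ c, (x c) ^ 2 * ∑ r, |M r c| := by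
            rw [← Finset.mul_sum, Finset.sum_comm]
            congr 1
            exact Finset.sum_congr rfl fun c _ => by
              rw [Finset.mul_sum]
              exact Finset.sum_congr rfl fun r _ => by ring
        _ ≤ A * ∑ c, (x c) ^ 2 * B := by
            apply mul_le_mul_of_nonneg_left _ hA
            exact Finset.sum_le_sum fun c _ => mul_le_mul_of_nonneg_left (hcol c) (sq_nonneg _)
        _ = A * B * ∑ c, (x c) ^ 2 := by rw [← Finset.sum_mul]; ring
    rw [EuclideanSpace.norm_eq, EuclideanSpace.norm_eq]
    calc Real.sqrt (∑ r, ‖(LinearMap.toContinuousLinearMap (Matrix.toEuclideanLin M)) x r‖ ^ 2)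
        = Real.sqrt (∑ r, (∑ c, M r c * x c) ^ 2) := by
          congr 1; exact Finset.sum_congr rfl fun r _ => by rw [happ, Real.norm_eq_abs, sq_abs]
      _ ≤ Real.sqrt (A * B * ∑ c, (x c) ^ 2) := Real.sqrt_le_sqrt key
      _ = Real.sqrt (A * B) * Real.sqrt (∑ c, ‖x c‖ ^ 2) := by
          rw [Real.sqrt_mul hAB]
          congr 2
          exact Finset.sum_congr rfl fun c _ => by rw [Real.norm_eq_abs, sq_abs]
  calc specNorm M ^ 2 ≤ Real.sqrt (A * B) ^ 2 :=
        pow_le_pow_left₀ (norm_nonneg _) hbound 2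
    _ = A * B := Real.sq_sqrt hAB

section Aux

variable {p q : ℕ} {S : Fin p → ℕ} {len : Fin (q + 2) → ℕ} {idx : ∀ t, Fin (len t) → Fin p}

/-- Entry formula for the flattening of a weighted chaos tensor. -/
lemma flatten_entry (f : (∀ u : Fin p, Fin (S u)) → ℝ) (R C : Finset (Fin (q + 2)))
    (r : ∀ t : {x // x ∈ R}, combIdx S len idx t.1)
    (c : ∀ t : {x // x ∈ C}, combIdx S len idx t.1) :
    flattenG (combIdx S len idx) (combTensorW S len idx f) R C r c =
      ∑ s : ∀ u : Fin p, Fin (S u),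
        if (∀ t : {x // x ∈ R}, ∀ j, s (idx t.1 j) = r t j)
            ∧ (∀ t : {x // x ∈ C}, ∀ j, s (idx t.1 j) = c t j) then f s else 0 := by
  classical
  simp only [flattenG, combTensorW, Matrix.of_apply]
  have h1 : ∀ w : ∀ t, combIdx S len idx t,
      (if (∀ t : {x // x ∈ R}, w t.1 = r t) ∧ (∀ t : {x // x ∈ C}, w t.1 = c t) then
        ∑ s ∈ Finset.univ.filter (fun s : ∀ u : Fin p, Fin (S u) =>
          ∀ t j, s (idx t j) = w t j), f s else 0)
      = ∑ s : ∀ u : Fin p, Fin (S u),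
          if ((fun t j => s (idx t j)) = w) ∧
             ((∀ t : {x // x ∈ R}, w t.1 = r t) ∧ (∀ t : {x // x ∈ C}, w t.1 = c t))
          then f s else 0 := by
    intro w
    rw [Finset.sum_filter]
    split_ifs with h
    · refine Finset.sum_congr rfl fun s _ => if_congr ?_ rfl rfl
      have hw : ((fun t j => s (idx t j)) = w) ↔ (∀ t j, s (idx t j) = w t j) := by
        constructor
        · intro hh t j; exact congrFun (congrFun hh t) j
        · intro hh; funext t j; exact hh t j
      rw [hw]
      exact (and_iff_left h).symm
    · rw [eq_comm]
      exact Finset.sum_eq_zero fun s _ => if_neg fun hc => h hc.2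
  rw [Finset.sum_congr rfl fun w _ => h1 w, Finset.sum_comm]
  refine Finset.sum_congr rfl fun s _ => ?_
  simp only [ite_and]
  rw [Finset.sum_ite_eq Finset.univ (fun t j => s (idx t j))
    (fun w => if (∀ t : {x // x ∈ R}, w t.1 = r t) then
      (if (∀ t : {x // x ∈ C}, w t.1 = c t) then f s else 0) else 0)]
  simp only [Finset.mem_univ, if_true]
  refine if_congr ?_ (if_congr ?_ rfl rfl) rfl
  · constructor
    · intro hh t j; exact congrFun (hh t) j
    · intro hh t; funext j; exact hh t j
  · constructor
    · intro hh t j; exact congrFun (hh t) j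
    · intro hh t; funext j; exact hh t j

/-- Counting bound: tuples with prescribed values on the coordinates hit by `T`. -/
lemma card_le_prod (hS : ∀ u, 0 < S u) (T : Finset (Fin (q + 2)))
    (r : ∀ t : {x // x ∈ T}, combIdx S len idx t.1) :
    (((Finset.univ : Finset (∀ u : Fin p, Fin (S u))).filter
        (fun s => ∀ t : {x // x ∈ T}, ∀ j, s (idx t.1 j) = r t j)).card : ℝ) ≤
      ∏ u ∈ (T.biUnion fun t => Finset.image (idx t) Finset.univ)ᶜ, (S u : ℝ) := by
  classical
  set 𝒯 := (T.biUnion fun t => Finset.image (idx t) Finset.univ) with h𝒯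
  set F := (Finset.univ : Finset (∀ u : Fin p, Fin (S u))).filter
        (fun s => ∀ t : {x // x ∈ T}, ∀ j, s (idx t.1 j) = r t j) with hF
  have hinjon : Set.InjOn (fun (s : ∀ u : Fin p, Fin (S u)) => fun u : {x // x ∈ 𝒯ᶜ} => s u.1)
      ↑F := by
    intro s hs s' hs' hss
    simp only [hF, Finset.coe_filter, Finset.mem_univ, true_and, Set.mem_setOf_eq] at hs hs'
    funext u
    by_cases hu : u ∈ 𝒯
    · rw [h𝒯, Finset.mem_biUnion] at hu
      obtain ⟨t, ht, hu⟩ := hu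
      rw [Finset.mem_image] at hu
      obtain ⟨j, _, rfl⟩ := hu
      rw [hs ⟨t, ht⟩ j, hs' ⟨t, ht⟩ j]
    · have hu' : u ∈ 𝒯ᶜ := Finset.mem_compl.mpr hu
      exact congrFun hss ⟨u, hu'⟩
  have hcard : F.card ≤ ∏ u ∈ 𝒯ᶜ, S u := by
    have h := Finset.card_le_card_of_injOn
      (t := (Finset.univ : Finset (∀ u : {x // x ∈ 𝒯ᶜ}, Fin (S u.1))))
      (fun (s : ∀ u : Fin p, Fin (S u)) => fun u : {x // x ∈ 𝒯ᶜ} => s u.1)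
      (fun s _ => Finset.mem_univ _) hinjon
    refine le_trans h ?_
    rw [Finset.card_univ, Fintype.card_pi]
    rw [← Finset.prod_coe_sort 𝒯ᶜ (fun u => S u)]
    exact le_of_eq (Finset.prod_congr rfl fun u _ => Fintype.card_fin _)
  calc (F.card : ℝ) ≤ ((∏ u ∈ 𝒯ᶜ, S u : ℕ) : ℝ) := Nat.cast_le.mpr hcard
    _ = ∏ u ∈ 𝒯ᶜ, (S u : ℝ) := by push_cast; rfl

/-- Row-sum bound for the flattening. -/
lemma rowSum_le (hS : ∀ u, 0 < S u) (f : (∀ u : Fin p, Fin (S u)) → ℝ) {K : ℝ}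
    (hK0 : 0 ≤ K) (hK : ∀ s, |f s| ≤ K) (R C : Finset (Fin (q + 2)))
    (r : ∀ t : {x // x ∈ R}, combIdx S len idx t.1) :
    ∑ c, |flattenG (combIdx S len idx) (combTensorW S len idx f) R C r c| ≤
      K * ∏ u ∈ (R.biUnion fun t => Finset.image (idx t) Finset.univ)ᶜ, (S u : ℝ) := by
  classical
  have step1 : ∑ c, |flattenG (combIdx S len idx) (combTensorW S len idx f) R C r c|
      ≤ ∑ c : ∀ t : {x // x ∈ C}, combIdx S len idx t.1, ∑ s : ∀ u : Fin p, Fin (S u),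
        if (∀ t : {x // x ∈ R}, ∀ j, s (idx t.1 j) = r t j)
            ∧ (∀ t : {x // x ∈ C}, ∀ j, s (idx t.1 j) = c t j) then |f s| else 0 := by
    refine Finset.sum_le_sum fun c _ => ?_
    rw [flatten_entry]
    refine le_trans (Finset.abs_sum_le_sum_abs _ _) (le_of_eq ?_)
    refine Finset.sum_congr rfl fun s _ => ?_
    split_ifs <;> simp
  have step2 : ∑ c : ∀ t : {x // x ∈ C}, combIdx S len idx t.1, ∑ s : ∀ u : Fin p, Fin (S u),
        (if (∀ t : {x // x ∈ R}, ∀ j, s (idx t.1 j) = r t j)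
            ∧ (∀ t : {x // x ∈ C}, ∀ j, s (idx t.1 j) = c t j) then |f s| else 0)
      = ∑ s : ∀ u : Fin p, Fin (S u),
        if (∀ t : {x // x ∈ R}, ∀ j, s (idx t.1 j) = r t j) then |f s| else 0 := by
    rw [Finset.sum_comm]
    refine Finset.sum_congr rfl fun s _ => ?_
    have hiff : ∀ c : ∀ t : {x // x ∈ C}, combIdx S len idx t.1,
        ((∀ t : {x // x ∈ R}, ∀ j, s (idx t.1 j) = r t j)
            ∧ (∀ t : {x // x ∈ C}, ∀ j, s (idx t.1 j) = c t j))
        ↔ ((c = fun (t : {x // x ∈ C}) j => s (idx t.1 j)) ∧ (∀ t : {x // x ∈ R}, ∀ j, s (idx t.1 j) = r t j)) := by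
      intro c
      constructor
      · rintro ⟨h1, h2⟩
        refine ⟨?_, h1⟩
        funext t j
        exact (h2 t j).symm
      · rintro ⟨h1, h2⟩
        exact ⟨h2, fun t j => (congrFun (congrFun h1 t) j).symm⟩

    calc ∑ c : ∀ t : {x // x ∈ C}, combIdx S len idx t.1,
          (if (∀ t : {x // x ∈ R}, ∀ j, s (idx t.1 j) = r t j)
            ∧ (∀ t : {x // x ∈ C}, ∀ j, s (idx t.1 j) = c t j) then |f s| else 0)
        = ∑ c : ∀ t : {x // x ∈ C}, combIdx S len idx t.1,
          (if (c = fun (t : {x // x ∈ C}) j => s (idx t.1 j)) ∧ (∀ t : {x // x ∈ R}, ∀ j, s (idx t.1 j) = r t j)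
            then |f s| else 0) := by
          refine Finset.sum_congr rfl fun c _ => ?_
          congr 1
          exact eq_iff_iff.mpr (hiff c)
      _ = _ := by
          simp only [ite_and]
          rw [Finset.sum_ite_eq' Finset.univ (fun (t : {x // x ∈ C}) j => s (idx t.1 j))
            (fun _ => if (∀ t : {x // x ∈ R}, ∀ j, s (idx t.1 j) = r t j) then |f s| else 0)]
          simp
  refine le_trans (step1.trans (le_of_eq step2)) ?_
  have step3 : ∑ s : ∀ u : Fin p, Fin (S u),
      (if (∀ t : {x // x ∈ R}, ∀ j, s (idx t.1 j) = r t j) then |f s| else 0)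
      ≤ ∑ s : ∀ u : Fin p, Fin (S u),
      (if (∀ t : {x // x ∈ R}, ∀ j, s (idx t.1 j) = r t j) then K else 0) := by
    refine Finset.sum_le_sum fun s _ => ?_
    split_ifs
    · exact hK s
    · exact le_refl 0
  have step4 : ∑ s : ∀ u : Fin p, Fin (S u),
      (if (∀ t : {x // x ∈ R}, ∀ j, s (idx t.1 j) = r t j) then K else 0)
      = (((Finset.univ : Finset (∀ u : Fin p, Fin (S u))).filter
          (fun s => ∀ t : {x // x ∈ R}, ∀ j, s (idx t.1 j) = r t j)).card : ℝ) * K := by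
    rw [← Finset.sum_filter, Finset.sum_const, nsmul_eq_mul]
  refine le_trans step3 (le_trans (le_of_eq step4) ?_)
  rw [mul_comm]
  exact mul_le_mul_of_nonneg_left (card_le_prod hS R r) hK0

end Aux

/-- norms of flattenings of a chaos of nearly combinatorial type. -/
theorem flattening_nearly_combinatorial (p q : ℕ) (hp : 0 < p) (hq : 0 < q)
    (S : Fin p → ℕ) (hS : ∀ u, 0 < S u) (len : Fin (q + 2) → ℕ)
    (idx : ∀ t, Fin (len t) → Fin p) (hinj : ∀ t, Function.Injective (idx t))
    (f : (∀ u : Fin p, Fin (S u)) → ℝ) (R C : Finset (Fin (q + 2))) :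
    specNorm (flattenG (combIdx S len idx) (combTensorW S len idx f) R C) ^ 2 ≤
      (⨆ s, |f s|) ^ 2 *
      ((∏ u ∈ (R.biUnion fun t => Finset.image (idx t) Finset.univ)ᶜ, (S u : ℝ)) *
       (∏ u ∈ (C.biUnion fun t => Finset.image (idx t) Finset.univ)ᶜ, (S u : ℝ))) := by
  classical
  have hne : Nonempty (∀ u : Fin p, Fin (S u)) := ⟨fun u => ⟨0, hS u⟩⟩
  set K := ⨆ s, |f s| with hKdef
  have hK : ∀ s, |f s| ≤ K := fun s =>
    le_ciSup (f := fun s => |f s|) (Set.Finite.bddAbove (Set.finite_range fun s => |f s|)) s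
  have hK0 : 0 ≤ K := le_trans (abs_nonneg _) (hK hne.some)
  have hPR : (0:ℝ) ≤ ∏ u ∈ (R.biUnion fun t => Finset.image (idx t) Finset.univ)ᶜ, (S u : ℝ) :=
    Finset.prod_nonneg fun u _ => Nat.cast_nonneg _
  have hPC : (0:ℝ) ≤ ∏ u ∈ (C.biUnion fun t => Finset.image (idx t) Finset.univ)ᶜ, (S u : ℝ) :=
    Finset.prod_nonneg fun u _ => Nat.cast_nonneg _
  have h := specNorm_sq_le_schur (flattenG (combIdx S len idx) (combTensorW S len idx f) R C)
    (mul_nonneg hK0 hPR) (mul_nonneg hK0 hPC)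
    (fun r => rowSum_le hS f hK0 hK R C r)
    (fun c => by
      calc ∑ r, |flattenG (combIdx S len idx) (combTensorW S len idx f) R C r c|
          = ∑ r, |flattenG (combIdx S len idx) (combTensorW S len idx f) C R c r| :=
            Finset.sum_congr rfl fun r _ => by
              rw [flattenG_symm (combIdx S len idx) (combTensorW S len idx f) R C r c]
        _ ≤ K * ∏ u ∈ (C.biUnion fun t => Finset.image (idx t) Finset.univ)ᶜ, (S u : ℝ) :=
            rowSum_le hS f hK0 hK C R c)
  refine le_trans h (le_of_eq (by ring))

end
end

section
/- Parameters of intermediate flattenings: let Z ⊆ [q] be nonempty and R, C ⊆ [q+2] with Z disjoint from R ∪ C. Then the coefficient tensor 𝒜[Z;R;C] of the intermediate flattening 𝒜[Z; R→C], viewed as a decoupled matrix chaos of order |Z|, satisfies: (i) σ(𝒜[Z;R;C]) = max over partitions R' ⊔ C' = Z of ‖𝒜^{(R∪R')→(C∪C')}‖; (ii) v(𝒜[Z;R;C]) = max over partitions R' ⊔ C' = Z with R' ≠ ∅ of ‖𝒜^{R'→(R∪C∪C')}‖; (iii) r(𝒜[Z;R;C]) = max over pairs R', C' with R' ∪ C'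 = Z and R' ∩ C' ≠ ∅ of ‖𝒜^{(R∪R')→(C∪C')}‖. -/
open MeasureTheory ProbabilityTheory Finset
open scoped ENNReal

noncomputable section

/-- Size of the range of coordinate `t` of the coefficient tensor of a matrix chaos of
order `q`: the first `q` coordinates range over `[m]`, coordinate `q+1` over `[d₁]`,
and coordinate `q+2` over `[d₂]`. -/
def cdim (q m d1 d2 : ℕ) (t : Fin (q + 2)) : ℕ :=
  if (t : ℕ) < q then m else if (t : ℕ) = q then d1 else d2

lemma cdim_lt {q m d1 d2 : ℕ} {t : Fin (q + 2)} (h : (t : ℕ) < q) : cdim q m d1 d2 t = m := by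
  simp [cdim, h]

lemma cdim_row (q m d1 d2 : ℕ) : cdim q m d1 d2 ⟨q, by omega⟩ = d1 := by
  simp [cdim]

lemma cdim_col (q m d1 d2 : ℕ) : cdim q m d1 d2 ⟨q + 1, by omega⟩ = d2 := by
  show (if q + 1 < q then m else if q + 1 = q then d1 else d2) = d2
  rw [if_neg (by omega), if_neg (by omega)]

/-- The coefficient tensor of order `q+2` associated to the matrix coefficients
`A : [m]^q → ℝ^{d₁×d₂}` of a matrix chaos. -/
def coeffTensor {q m d1 d2 : ℕ} (A : (Fin q → Fin m) → Matrix (Fin d1) (Fin d2) ℝ)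
    (i : ∀ t : Fin (q + 2), Fin (cdim q m d1 d2 t)) : ℝ :=
  A (fun s => Fin.cast (cdim_lt (by simp)) (i (Fin.castLE (by omega) s)))
    (Fin.cast (cdim_row q m d1 d2) (i ⟨q, by omega⟩))
    (Fin.cast (cdim_col q m d1 d2) (i ⟨q + 1, by omega⟩))

/-- The parameter `σ(𝒜)`: the largest spectral norm of a σ-flattening, i.e. a flattening
along a partition `R ⊔ C = [k+2]` keeping the row matrix coordinate `k+1` in `R` and the
column matrix coordinate `k+2` in `C`. -/
def sigmaP {k : ℕ} (κ : Fin (k + 2) → Type) [∀ t, Fintype (κ t)] [∀ t, DecidableEq (κ t)]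
    (𝒜 : (∀ t, κ t) → ℝ) : ℝ :=
  sSup {x : ℝ | ∃ R C : Finset (Fin (k + 2)), Disjoint R C ∧ R ∪ C = Finset.univ ∧
    (⟨k, by omega⟩ : Fin (k + 2)) ∈ R ∧ (⟨k + 1, by omega⟩ : Fin (k + 2)) ∈ C ∧
    x = specNorm (flattenG κ 𝒜 R C)}

/-- The parameter `v(𝒜)`: the largest spectral norm of a v-flattening, i.e. a flattening
along a partition `R ⊔ C = [k+2]` with both matrix coordinates in `C` and `R ≠ ∅`. -/
def vP {k : ℕ} (κ : Fin (k + 2) → Type) [∀ t, Fintype (κ t)] [∀ t, DecidableEq (κ t)]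
    (𝒜 : (∀ t, κ t) → ℝ) : ℝ :=
  sSup {x : ℝ | ∃ R C : Finset (Fin (k + 2)), Disjoint R C ∧ R ∪ C = Finset.univ ∧
    (⟨k, by omega⟩ : Fin (k + 2)) ∈ C ∧ (⟨k + 1, by omega⟩ : Fin (k + 2)) ∈ C ∧
    R.Nonempty ∧ x = specNorm (flattenG κ 𝒜 R C)}

/-- The parameter `r(𝒜)`: the largest spectral norm of an r-flattening, i.e. a flattening
with `R ∪ C = [k+2]`, `k+1 ∈ R`, `k+2 ∈ C` and `∅ ≠ R ∩ C ⊆ [k]`. -/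
def rP {k : ℕ} (κ : Fin (k + 2) → Type) [∀ t, Fintype (κ t)] [∀ t, DecidableEq (κ t)]
    (𝒜 : (∀ t, κ t) → ℝ) : ℝ :=
  sSup {x : ℝ | ∃ R C : Finset (Fin (k + 2)), R ∪ C = Finset.univ ∧
    (⟨k, by omega⟩ : Fin (k + 2)) ∈ R ∧ (⟨k + 1, by omega⟩ : Fin (k + 2)) ∈ C ∧
    (R ∩ C).Nonempty ∧ (∀ t ∈ R ∩ C, (t : ℕ) < k) ∧
    x = specNorm (flattenG κ 𝒜 R C)}

/-- Index types of the coefficient tensor of the intermediate flattening `𝒜[Z; R→C]`,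
viewed as a decoupled matrix chaos of order `k = |Z|`: the first `k` coordinates range over
`[m]`, the row matrix coordinate over tuples on `R`, the column matrix coordinate over
tuples on `C`. -/
def interKappa {q : ℕ} (m d1 d2 : ℕ) (R C : Finset (Fin (q + 2))) (k : ℕ)
    (t : Fin (k + 2)) : Type :=
  if (t : ℕ) < k then Fin m
  else if (t : ℕ) = k then (∀ s : {x // x ∈ R}, Fin (cdim q m d1 d2 s.1))
  else (∀ s : {x // x ∈ C}, Fin (cdim q m d1 d2 s.1))

instance interKappa.instFintype {q : ℕ} (m d1 d2 : ℕ) (R C : Finset (Fin (q + 2))) (k : ℕ)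
    (t : Fin (k + 2)) : Fintype (interKappa m d1 d2 R C k t) := by
  unfold interKappa; split_ifs <;> infer_instance

instance interKappa.instDecidableEq {q : ℕ} (m d1 d2 : ℕ) (R C : Finset (Fin (q + 2))) (k : ℕ)
    (t : Fin (k + 2)) : DecidableEq (interKappa m d1 d2 R C k t) := by
  unfold interKappa; split_ifs <;> infer_instance

lemma interKappa_chaos {q : ℕ} (m d1 d2 : ℕ) (R C : Finset (Fin (q + 2))) {k : ℕ}
    (a : Fin k) : interKappa m d1 d2 R C k (Fin.castLE (by omega) a) = Fin m := by
  simp [interKappa, a.isLt]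

lemma interKappa_row {q : ℕ} (m d1 d2 : ℕ) (R C : Finset (Fin (q + 2))) (k : ℕ) :
    interKappa m d1 d2 R C k ⟨k, by omega⟩
      = (∀ s : {x // x ∈ R}, Fin (cdim q m d1 d2 s.1)) := by
  show (if k < k then Fin m else if k = k then _ else _) = _
  rw [if_neg (by omega), if_pos rfl]

lemma interKappa_col {q : ℕ} (m d1 d2 : ℕ) (R C : Finset (Fin (q + 2))) (k : ℕ) :
    interKappa m d1 d2 R C k ⟨k + 1, by omega⟩
      = (∀ s : {x // x ∈ C}, Fin (cdim q m d1 d2 s.1)) := by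
  show (if k + 1 < k then Fin m else if k + 1 = k then _ else _) = _
  rw [if_neg (by omega), if_neg (by omega)]

/-- The coefficient tensor (of order `|Z| + 2`) of the intermediate flattening
`𝒜[Z; R→C]` of a tensor `𝒜`, viewed as a decoupled matrix chaos of order `k = |Z|`:
its entry at a tuple of `k` chaos indices, a row tuple on `R` and a column tuple on `C`
is the sum of `𝒜` over all full index tuples with the prescribed restrictions to
`Z`, `R` and `C`. -/
def interTensor {q : ℕ} (m d1 d2 : ℕ) (𝒜 : (∀ t : Fin (q + 2), Fin (cdim q m d1 d2 t)) → ℝ)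
    (Z R C : Finset (Fin (q + 2))) {k : ℕ} (hk : Z.card = k)
    (j : ∀ t : Fin (k + 2), interKappa m d1 d2 R C k t) : ℝ :=
  ∑ i : ∀ t : Fin (q + 2), Fin (cdim q m d1 d2 t),
    if (∀ a : Fin k, ((i ((Z.orderIsoOfFin hk a) : Fin (q + 2))) : ℕ)
          = ((cast (interKappa_chaos m d1 d2 R C a) (j (Fin.castLE (by omega) a)) : Fin m) : ℕ))
        ∧ (∀ s : {x // x ∈ R},
            i s.1 = (cast (interKappa_row m d1 d2 R C k) (j ⟨k, by omega⟩)) s)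
        ∧ (∀ s : {x // x ∈ C},
            i s.1 = (cast (interKappa_col m d1 d2 R C k) (j ⟨k + 1, by omega⟩)) s)
    then 𝒜 i else 0


/-! Each coordinate of `𝒜[Z; R→C]` bundles coordinates of `𝒜`: a chaos coordinate is a single
element of `Z`, the row coordinate is the tuple on `R` and the column coordinate the tuple on `C`.
So a flattening of `𝒜[Z;R;C]` along `T → T'` is, up to zero rows and columns (index tuples that
disagree on an overlap of the bundles), the flattening of `𝒜` along the unions of the bundles in
`T` and `T'`, and has the same spectral norm. The three identities then come from matching the
admissible pairs `(T, T')` of subsets of `[|Z| + 2]` with the pairs `(R', C')` of subsets of `Z`. -/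

section Padding

open scoped Matrix Matrix.Norms.L2Operator

variable {α β α' β' : Type*} [Fintype α] [Fintype β] [Fintype α'] [Fintype β']
  [DecidableEq β] [DecidableEq β']

lemma l2_opNorm_one_submatrix_le_one [DecidableEq α] [DecidableEq α'] (e : α' ↪ α) :
    ‖(1 : Matrix α α ℝ).submatrix id e‖ ≤ 1 := by
  have hsq : ‖(1 : Matrix α α ℝ).submatrix id e‖ * ‖(1 : Matrix α α ℝ).submatrix id e‖ ≤ 1 := by
    rw [← Matrix.l2_opNorm_conjTranspose_mul_self, Matrix.conjTranspose_submatrix,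
      ← Matrix.submatrix_mul _ _ _ _ _ Function.bijective_id, Matrix.conjTranspose_one,
      Matrix.one_mul, Matrix.submatrix_one_embedding, ← Matrix.l2_opNorm_toEuclideanCLM, map_one]
    exact ContinuousLinearMap.norm_id_le
  nlinarith [norm_nonneg ((1 : Matrix α α ℝ).submatrix id e)]

lemma l2_opNorm_mul_mul_le_of_le_one {γ δ γ' δ' : Type*} [Fintype γ] [Fintype δ] [Fintype γ']
    [Fintype δ'] [DecidableEq γ] [DecidableEq δ] [DecidableEq δ'] (A : Matrix γ' γ ℝ)
    (N : Matrix γ δ ℝ) (B : Matrix δ δ' ℝ) (hA : ‖A‖ ≤ 1) (hB : ‖B‖ ≤ 1) :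
    ‖A * N * B‖ ≤ ‖N‖ :=
  calc ‖A * N * B‖ ≤ ‖A‖ * ‖N‖ * ‖B‖ := (Matrix.l2_opNorm_mul _ _).trans
          (mul_le_mul_of_nonneg_right (Matrix.l2_opNorm_mul _ _) (norm_nonneg _))
    _ ≤ 1 * ‖N‖ * 1 := by gcongr
    _ = ‖N‖ := by ring

lemma specNorm_submatrix_of_eq_zero [DecidableEq α] [DecidableEq α'] (M : Matrix α β ℝ)
    (e₁ : α' ↪ α) (e₂ : β' ↪ β)
    (hM : ∀ a b, a ∉ Set.range e₁ ∨ b ∉ Set.range e₂ → M a b = 0) :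
    specNorm (M.submatrix e₁ e₂) = specNorm M := by
  set P₁ := (1 : Matrix α α ℝ).submatrix id e₁
  set P₂ := (1 : Matrix β β ℝ).submatrix id e₂
  have hN : M.submatrix e₁ e₂ = P₁ᴴ * M * P₂ := by
    ext a b; simp [P₁, P₂, Matrix.mul_apply, Matrix.one_apply]
  have hM' : M = P₁ * M.submatrix e₁ e₂ * P₂ᴴ := by
    ext a b
    by_cases hab : a ∈ Set.range e₁ ∧ b ∈ Set.range e₂
    · obtain ⟨⟨a', rfl⟩, ⟨b', rfl⟩⟩ := hab
      simp [P₁, P₂, Matrix.mul_apply, Matrix.one_apply]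
    · rw [hM a b (not_and_or.mp hab)]
      rcases not_and_or.mp hab with ha | hb
      · simp only [Set.mem_range, not_exists] at ha
        simp [P₁, P₂, Matrix.mul_apply, Matrix.one_apply, Ne.symm (ha _)]
      · simp only [Set.mem_range, not_exists] at hb
        simp [P₁, P₂, Matrix.mul_apply, Matrix.one_apply, hb]
  have h₁ := l2_opNorm_one_submatrix_le_one e₁
  have h₂ := l2_opNorm_one_submatrix_le_one e₂
  have h₁' : ‖P₁ᴴ‖ ≤ 1 := (Matrix.l2_opNorm_conjTranspose P₁).trans_le h₁
  have h₂' : ‖P₂ᴴ‖ ≤ 1 := (Matrix.l2_opNorm_conjTranspose P₂).trans_le h₂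
  apply le_antisymm
  · calc ‖M.submatrix e₁ e₂‖ = ‖P₁ᴴ * M * P₂‖ := by rw [hN]
      _ ≤ ‖M‖ := l2_opNorm_mul_mul_le_of_le_one _ _ _ h₁' h₂
  · calc ‖M‖ = ‖P₁ * M.submatrix e₁ e₂ * P₂ᴴ‖ := by rw [← hM']
      _ ≤ ‖M.submatrix e₁ e₂‖ := l2_opNorm_mul_mul_le_of_le_one _ _ _ h₁ h₂'

end Padding

section Regrouping

variable {n n' : ℕ} {κ : Fin n → Type} {κ' : Fin n' → Type}
  (src : Fin n' → Finset (Fin n)) (ι : ∀ t, (∀ s : {x // x ∈ src t}, κ s.1) → κ' t)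

def regroup (i : ∀ s, κ s) (t : Fin n') : κ' t :=
  ι t fun s => i s.1

/-- `regroup src ι i` restricted to `T`, as a function of `i` restricted to `T.biUnion src`. -/
def regroupOn (T : Finset (Fin n')) (h : ∀ s : {x // x ∈ T.biUnion src}, κ s.1)
    (t : {x // x ∈ T}) : κ' t.1 :=
  ι t.1 fun s => h ⟨s.1, Finset.mem_biUnion.2 ⟨t.1, t.2, s.2⟩⟩

lemma regroupOn_injective (hι : ∀ t, Function.Injective (ι t)) (T : Finset (Fin n')) :
    Function.Injective (regroupOn src ι T) := by
  intro h h' hh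
  funext ⟨s, hs⟩
  obtain ⟨t, ht, hst⟩ := Finset.mem_biUnion.1 hs
  exact congrFun (hι t (congrFun hh ⟨t, ht⟩)) ⟨s, hst⟩

variable [∀ t, Fintype (κ t)] [∀ t, Fintype (κ' t)] [∀ t, DecidableEq (κ' t)]

lemma flattenG_apply [∀ t, DecidableEq (κ t)] (𝒜 : (∀ t, κ t) → ℝ) (R C : Finset (Fin n))
    (r : ∀ t : {x // x ∈ R}, κ t.1) (c : ∀ t : {x // x ∈ C}, κ t.1) :
    flattenG κ 𝒜 R C r c = ∑ i : ∀ t, κ t,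
      if (fun t : {x // x ∈ R} => i t.1) = r ∧ (fun t : {x // x ∈ C} => i t.1) = c
      then 𝒜 i else 0 := by
  simp only [flattenG, Matrix.of_apply, funext_iff]

-- `simp` cannot rewrite the index sets of a flattening: the type of the matrix depends on them.
lemma specNorm_flattenG_congr [∀ t, DecidableEq (κ t)] {𝒜 : (∀ t, κ t) → ℝ}
    {R C R' C' : Finset (Fin n)} (hR : R = R') (hC : C = C') :
    specNorm (flattenG κ 𝒜 R C) = specNorm (flattenG κ 𝒜 R' C') := by
  subst hR hC
  rfl

def pushforwardTensor (φ : (∀ t, κ t) → ∀ t, κ' t) (𝒜 : (∀ t, κ t) → ℝ) (j : ∀ t, κ' t) : ℝ :=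
  ∑ i, if φ i = j then 𝒜 i else 0

lemma flattenG_pushforwardTensor_apply (φ : (∀ t, κ t) → ∀ t, κ' t) (𝒜 : (∀ t, κ t) → ℝ)
    (R C : Finset (Fin n')) (r : ∀ t : {x // x ∈ R}, κ' t.1) (c : ∀ t : {x // x ∈ C}, κ' t.1) :
    flattenG κ' (pushforwardTensor φ 𝒜) R C r c = ∑ i : ∀ t, κ t,
      if (fun t : {x // x ∈ R} => φ i t.1) = r ∧ (fun t : {x // x ∈ C} => φ i t.1) = c
      then 𝒜 i else 0 := by
  simp only [flattenG_apply, pushforwardTensor, Finset.ite_sum_zero, ← ite_and]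
  rw [Finset.sum_comm]
  refine Finset.sum_congr rfl fun i _ => ?_
  simp only [and_comm (b := φ _ = _), ite_and, Finset.sum_ite_eq, Finset.mem_univ, if_true]

theorem specNorm_flattenG_pushforwardTensor_regroup [∀ t, DecidableEq (κ t)]
    (hι : ∀ t, Function.Injective (ι t)) (𝒜 : (∀ t, κ t) → ℝ) (R C : Finset (Fin n')) :
    specNorm (flattenG κ' (pushforwardTensor (regroup src ι) 𝒜) R C)
      = specNorm (flattenG κ 𝒜 (R.biUnion src) (C.biUnion src)) := by
  let eR : _ ↪ _ := ⟨regroupOn src ι R, regroupOn_injective src ι hι R⟩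
  let eC : _ ↪ _ := ⟨regroupOn src ι C, regroupOn_injective src ι hι C⟩
  have hentry : ∀ r c, flattenG κ' (pushforwardTensor (regroup src ι) 𝒜) R C r c
      = ∑ i : ∀ t, κ t, if eR (fun s => i s.1) = r ∧ eC (fun s => i s.1) = c then 𝒜 i else 0 :=
    fun r c => flattenG_pushforwardTensor_apply _ _ _ _ r c
  rw [← specNorm_submatrix_of_eq_zero _ eR eC]
  · congr 1
    ext r c
    rw [Matrix.submatrix_apply, hentry, flattenG_apply]
    simp only [eR.injective.eq_iff, eC.injective.eq_iff]
  · rintro r c (hr | hc) <;> rw [hentry] <;> refine Finset.sum_eq_zero fun i _ => if_neg ?_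
    · exact fun h => hr ⟨_, h.1⟩
    · exact fun h => hc ⟨_, h.2⟩

end Regrouping

lemma Fin.forall_fin_add_two {k : ℕ} {P : Fin (k + 2) → Prop} :
    (∀ t, P t) ↔ (∀ a : Fin k, P (Fin.castLE (by omega) a)) ∧ P ⟨k, by omega⟩ ∧
      P ⟨k + 1, by omega⟩ := by
  refine ⟨fun h => ⟨fun a => h _, h _, h _⟩, fun ⟨hcast, hrow, hcol⟩ ⟨t, ht⟩ => ?_⟩
  rcases lt_trichotomy t k with h | rfl | h
  · exact hcast ⟨t, h⟩
  · exact hrow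
  · obtain rfl : t = k + 1 := by omega
    exact hcol

lemma Fin.exists_fin_add_two {k : ℕ} {P : Fin (k + 2) → Prop} :
    (∃ t, P t) ↔ (∃ a : Fin k, P (Fin.castLE (by omega) a)) ∨ P ⟨k, by omega⟩ ∨
      P ⟨k + 1, by omega⟩ := by
  simpa only [not_forall, not_not, not_and_or] using (Fin.forall_fin_add_two (P := (¬ P ·))).not

section IntermediateCoordinates

variable {q : ℕ} (m d1 d2 : ℕ) (Z R C : Finset (Fin (q + 2))) {k : ℕ} (hk : Z.card = k)

/-- The coordinates of `𝒜` that coordinate `t` of `𝒜[Z; R→C]` is made of. -/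
def interSrc (t : Fin (k + 2)) : Finset (Fin (q + 2)) :=
  if h : (t : ℕ) < k then {Z.orderEmbOfFin hk ⟨t, h⟩} else if (t : ℕ) = k then R else C

@[simp]
lemma interSrc_castLE (a : Fin k) :
    interSrc Z R C hk (Fin.castLE (by omega) a) = {Z.orderEmbOfFin hk a} := by
  simp [interSrc]

@[simp]
lemma interSrc_row : interSrc Z R C hk ⟨k, by omega⟩ = R := by
  simp [interSrc]

@[simp]
lemma interSrc_col : interSrc Z R C hk ⟨k + 1, by omega⟩ = C := by
  simp [interSrc]

def interEncode (hZq : ∀ t ∈ Z, (t : ℕ) < q) (t : Fin (k + 2))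
    (x : ∀ s : {x // x ∈ interSrc Z R C hk t}, Fin (cdim q m d1 d2 s.1)) :
    interKappa m d1 d2 R C k t :=
  if h : (t : ℕ) < k then
    cast (by simp [interKappa, h])
      (Fin.cast (cdim_lt (hZq _ (Z.orderEmbOfFin_mem hk _)))
        (x ⟨Z.orderEmbOfFin hk ⟨t, h⟩, by simp [interSrc, h]⟩))
  else if h' : (t : ℕ) = k then
    cast (by simp [interKappa, h'])
      (fun s : {x // x ∈ R} => x ⟨s.1, by simp [interSrc, h', s.2]⟩)
  else
    cast (by simp [interKappa, h, h'])
      (fun s : {x // x ∈ C} => x ⟨s.1, by simp [interSrc, h, h', s.2]⟩)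

variable (hZq : ∀ t ∈ Z, (t : ℕ) < q)

lemma cast_interEncode_castLE (a : Fin k)
    (x : ∀ s : {x // x ∈ interSrc Z R C hk (Fin.castLE (by omega) a)},
      Fin (cdim q m d1 d2 s.1)) :
    cast (interKappa_chaos m d1 d2 R C a)
        (interEncode m d1 d2 Z R C hk hZq (Fin.castLE (by omega) a) x)
      = Fin.cast (cdim_lt (hZq _ (Z.orderEmbOfFin_mem hk a)))
          (x ⟨Z.orderEmbOfFin hk a, by simp⟩) := by
  simp [interEncode, a.2]

lemma cast_interEncode_row
    (x : ∀ s : {x // x ∈ interSrc Z R C hk ⟨k, by omega⟩}, Fin (cdim q m d1 d2 s.1)) :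
    cast (interKappa_row m d1 d2 R C k) (interEncode m d1 d2 Z R C hk hZq ⟨k, by omega⟩ x)
      = fun s : {x // x ∈ R} => x ⟨s.1, by simp⟩ := by
  simp [interEncode]

lemma cast_interEncode_col
    (x : ∀ s : {x // x ∈ interSrc Z R C hk ⟨k + 1, by omega⟩}, Fin (cdim q m d1 d2 s.1)) :
    cast (interKappa_col m d1 d2 R C k) (interEncode m d1 d2 Z R C hk hZq ⟨k + 1, by omega⟩ x)
      = fun s : {x // x ∈ C} => x ⟨s.1, by simp⟩ := by
  simp [interEncode]

lemma interEncode_injective (t : Fin (k + 2)) :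
    Function.Injective (interEncode m d1 d2 Z R C hk hZq t) := by
  intro x y hxy
  funext ⟨s, hs⟩
  unfold interEncode at hxy
  split_ifs at hxy with h h'
  · obtain rfl : s = Z.orderEmbOfFin hk ⟨t, h⟩ := by simpa [interSrc, h] using hs
    exact Fin.cast_injective _ ((cast_inj _).1 hxy)
  · exact congrFun ((cast_inj _).1 hxy) ⟨s, by simpa [interSrc, h, h'] using hs⟩
  · exact congrFun ((cast_inj _).1 hxy) ⟨s, by simpa [interSrc, h, h'] using hs⟩

theorem interTensor_eq_pushforwardTensor
    (𝒜 : (∀ t : Fin (q + 2), Fin (cdim q m d1 d2 t)) → ℝ) :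
    interTensor m d1 d2 𝒜 Z R C hk
      = pushforwardTensor (regroup (interSrc Z R C hk) (interEncode m d1 d2 Z R C hk hZq)) 𝒜 := by
  funext j
  refine Finset.sum_congr rfl fun i _ => if_congr ?_ rfl rfl
  rw [funext_iff, Fin.forall_fin_add_two]
  refine and_congr (forall_congr' fun a => ?_) (and_congr ?_ ?_)
  · rw [← cast_inj (interKappa_chaos m d1 d2 R C a), regroup, cast_interEncode_castLE,
      Fin.ext_iff, Fin.val_cast, Finset.coe_orderIsoOfFin_apply]
  · rw [← cast_inj (interKappa_row m d1 d2 R C k), regroup, cast_interEncode_row, funext_iff]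
  · rw [← cast_inj (interKappa_col m d1 d2 R C k), regroup, cast_interEncode_col, funext_iff]

end IntermediateCoordinates

section ChaosCoordinates

variable {q : ℕ} (Z : Finset (Fin (q + 2))) {k : ℕ} (hk : Z.card = k)

def chaosPart (T : Finset (Fin (k + 2))) : Finset (Fin (q + 2)) :=
  (Finset.univ.filter fun a : Fin k => Fin.castLE (by omega) a ∈ T).map
    (Z.orderEmbOfFin hk).toEmbedding

def chaosLift (S : Finset (Fin (q + 2))) : Finset (Fin (k + 2)) :=
  (Finset.univ.filter fun a : Fin k => Z.orderEmbOfFin hk a ∈ S).map (Fin.castLEEmb (by omega))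

lemma mem_chaosPart {T : Finset (Fin (k + 2))} {s : Fin (q + 2)} :
    s ∈ chaosPart Z hk T ↔
      ∃ a : Fin k, Fin.castLE (by omega) a ∈ T ∧ Z.orderEmbOfFin hk a = s := by
  simp [chaosPart]

lemma orderEmbOfFin_mem_chaosPart {T : Finset (Fin (k + 2))} {a : Fin k} :
    Z.orderEmbOfFin hk a ∈ chaosPart Z hk T ↔ Fin.castLE (by omega) a ∈ T := by
  simp [chaosPart]

lemma castLE_mem_chaosLift {S : Finset (Fin (q + 2))} {a : Fin k} :
    Fin.castLE (by omega) a ∈ chaosLift Z hk S ↔ Z.orderEmbOfFin hk a ∈ S := by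
  simp [chaosLift]

lemma lt_of_mem_chaosLift {S : Finset (Fin (q + 2))} {t : Fin (k + 2)}
    (ht : t ∈ chaosLift Z hk S) : (t : ℕ) < k := by
  obtain ⟨a, -, rfl⟩ := Finset.mem_map.1 ht
  exact a.2

@[simp]
lemma row_notMem_chaosLift (S : Finset (Fin (q + 2))) :
    (⟨k, by omega⟩ : Fin (k + 2)) ∉ chaosLift Z hk S :=
  fun h => lt_irrefl k (lt_of_mem_chaosLift Z hk h)

@[simp]
lemma col_notMem_chaosLift (S : Finset (Fin (q + 2))) :
    (⟨k + 1, by omega⟩ : Fin (k + 2)) ∉ chaosLift Z hk S :=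
  fun h => (lt_of_mem_chaosLift Z hk h).not_gt (Nat.lt_succ_self k)

lemma exists_orderEmbOfFin_eq {s : Fin (q + 2)} (hs : s ∈ Z) : ∃ a, Z.orderEmbOfFin hk a = s :=
  (Set.ext_iff.1 (Z.range_orderEmbOfFin hk) s).2 hs

lemma chaosPart_union (T T' : Finset (Fin (k + 2))) :
    chaosPart Z hk (T ∪ T') = chaosPart Z hk T ∪ chaosPart Z hk T' := by
  simp only [chaosPart, Finset.mem_union, Finset.filter_or, Finset.map_union]

lemma chaosPart_inter (T T' : Finset (Fin (k + 2))) :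
    chaosPart Z hk (T ∩ T') = chaosPart Z hk T ∩ chaosPart Z hk T' := by
  simp only [chaosPart, Finset.mem_inter, Finset.filter_and, Finset.map_inter]

lemma chaosPart_univ : chaosPart Z hk Finset.univ = Z := by
  simp [chaosPart]

lemma chaosPart_disjoint {T T' : Finset (Fin (k + 2))} (h : Disjoint T T') :
    Disjoint (chaosPart Z hk T) (chaosPart Z hk T') := by
  rw [Finset.disjoint_iff_inter_eq_empty, ← chaosPart_inter,
    Finset.disjoint_iff_inter_eq_empty.1 h]
  simp [chaosPart]

lemma chaosPart_insert_of_not_lt (T : Finset (Fin (k + 2))) {t : Fin (k + 2)}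
    (ht : ¬ (t : ℕ) < k) :
    chaosPart Z hk (insert t T) = chaosPart Z hk T := by
  ext s
  simp only [mem_chaosPart, Finset.mem_insert]
  refine exists_congr fun a => and_congr_left fun _ => or_iff_right fun h => ht ?_
  rw [← h]
  exact a.2

@[simp]
lemma chaosPart_insert_row (T : Finset (Fin (k + 2))) :
    chaosPart Z hk (insert ⟨k, by omega⟩ T) = chaosPart Z hk T :=
  chaosPart_insert_of_not_lt Z hk T (lt_irrefl k)

@[simp]
lemma chaosPart_insert_col (T : Finset (Fin (k + 2))) :
    chaosPart Z hk (insert ⟨k + 1, by omega⟩ T) = chaosPart Z hk T :=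
  chaosPart_insert_of_not_lt Z hk T (by simp)

lemma chaosPart_chaosLift {S : Finset (Fin (q + 2))} (hS : S ⊆ Z) :
    chaosPart Z hk (chaosLift Z hk S) = S := by
  ext s
  rw [mem_chaosPart]
  constructor
  · rintro ⟨a, ha, rfl⟩
    exact (castLE_mem_chaosLift Z hk).1 ha
  · intro hs
    obtain ⟨a, rfl⟩ := exists_orderEmbOfFin_eq Z hk (hS hs)
    exact ⟨a, (castLE_mem_chaosLift Z hk).2 hs, rfl⟩

lemma chaosLift_disjoint {S S' : Finset (Fin (q + 2))} (h : Disjoint S S') :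
    Disjoint (chaosLift Z hk S) (chaosLift Z hk S') := by
  refine Finset.disjoint_left.2 fun t ht ht' => ?_
  obtain ⟨a, -, rfl⟩ := Finset.mem_map.1 ht
  exact Finset.disjoint_left.1 h ((castLE_mem_chaosLift Z hk).1 ht)
    ((castLE_mem_chaosLift Z hk).1 ht')

lemma eq_univ_of_chaosLift_subset {S : Finset (Fin (q + 2))} (hS : Z ⊆ S)
    {T : Finset (Fin (k + 2))} (hT : chaosLift Z hk S ⊆ T)
    (hrow : ⟨k, by omega⟩ ∈ T) (hcol : ⟨k + 1, by omega⟩ ∈ T) : T = Finset.univ :=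
  Finset.eq_univ_of_forall <| Fin.forall_fin_add_two.2
    ⟨fun a => hT ((castLE_mem_chaosLift Z hk).2 (hS (Z.orderEmbOfFin_mem hk a))), hrow, hcol⟩

lemma chaosPart_nonempty {T : Finset (Fin (k + 2))} (hT : T.Nonempty)
    (hrow : ⟨k, by omega⟩ ∉ T) (hcol : ⟨k + 1, by omega⟩ ∉ T) : (chaosPart Z hk T).Nonempty := by
  obtain ⟨t, ht⟩ := hT
  obtain ⟨a, ha⟩ : ∃ a : Fin k, Fin.castLE (by omega) a ∈ T := by
    rcases Fin.exists_fin_add_two.1 ⟨t, ht⟩ with h | h | h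
    exacts [h, (hrow h).elim, (hcol h).elim]
  exact ⟨_, (orderEmbOfFin_mem_chaosPart Z hk).2 ha⟩

lemma chaosLift_nonempty {S : Finset (Fin (q + 2))} (hS : S ⊆ Z) (hne : S.Nonempty) :
    (chaosLift Z hk S).Nonempty := by
  obtain ⟨s, hs⟩ := hne
  obtain ⟨a, rfl⟩ := exists_orderEmbOfFin_eq Z hk (hS hs)
  exact ⟨_, (castLE_mem_chaosLift Z hk).2 hs⟩

lemma chaosLift_union (S S' : Finset (Fin (q + 2))) :
    chaosLift Z hk (S ∪ S') = chaosLift Z hk S ∪ chaosLift Z hk S' := by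
  simp only [chaosLift, Finset.mem_union, Finset.filter_or, Finset.map_union]

lemma chaosLift_inter (S S' : Finset (Fin (q + 2))) :
    chaosLift Z hk (S ∩ S') = chaosLift Z hk S ∩ chaosLift Z hk S' := by
  simp only [chaosLift, Finset.mem_inter, Finset.filter_and, Finset.map_inter]

lemma insert_chaosLift_union_insert_chaosLift {R' C' : Finset (Fin (q + 2))} (h : R' ∪ C' = Z) :
    insert ⟨k, by omega⟩ (chaosLift Z hk R') ∪ insert ⟨k + 1, by omega⟩ (chaosLift Z hk C')
      = Finset.univ := by
  refine eq_univ_of_chaosLift_subset Z hk h.ge ?_ (by simp) (by simp)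
  rw [chaosLift_union]
  exact Finset.union_subset_union (Finset.subset_insert _ _) (Finset.subset_insert _ _)

variable (R C : Finset (Fin (q + 2)))

lemma biUnion_interSrc (T : Finset (Fin (k + 2))) :
    T.biUnion (interSrc Z R C hk)
      = (if ⟨k, by omega⟩ ∈ T then R else ∅) ∪ (if ⟨k + 1, by omega⟩ ∈ T then C else ∅)
        ∪ chaosPart Z hk T := by
  ext s
  simp only [Finset.mem_biUnion, Fin.exists_fin_add_two, interSrc_castLE, interSrc_row,
    interSrc_col, Finset.mem_singleton, Finset.mem_union, mem_chaosPart]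
  split_ifs <;> aesop

end ChaosCoordinates

section IntermediateParameters

variable {q : ℕ} (m d1 d2 : ℕ) (Z R C : Finset (Fin (q + 2))) {k : ℕ} (hk : Z.card = k)
  (hZq : ∀ t ∈ Z, (t : ℕ) < q) (𝒜 : (∀ t : Fin (q + 2), Fin (cdim q m d1 d2 t)) → ℝ)

include hZq in
theorem specNorm_flattenG_interTensor (T T' : Finset (Fin (k + 2))) :
    specNorm (flattenG (interKappa m d1 d2 R C k) (interTensor m d1 d2 𝒜 Z R C hk) T T')
      = specNorm (flattenG (fun t => Fin (cdim q m d1 d2 t)) 𝒜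
          (T.biUnion (interSrc Z R C hk)) (T'.biUnion (interSrc Z R C hk))) := by
  rw [interTensor_eq_pushforwardTensor m d1 d2 Z R C hk hZq]
  exact specNorm_flattenG_pushforwardTensor_regroup _ _
    (interEncode_injective m d1 d2 Z R C hk hZq) 𝒜 T T'

include hZq in
theorem sigmaP_interTensor :
    sigmaP (interKappa m d1 d2 R C k) (interTensor m d1 d2 𝒜 Z R C hk) =
      sSup {x : ℝ | ∃ R' C' : Finset (Fin (q + 2)), Disjoint R' C' ∧ R' ∪ C' = Z ∧
        x = specNorm (flattenG (fun t => Fin (cdim q m d1 d2 t)) 𝒜 (R ∪ R') (C ∪ C'))} := by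
  unfold sigmaP
  congr 1
  ext x
  simp only [specNorm_flattenG_interTensor m d1 d2 Z R C hk hZq]
  constructor
  · rintro ⟨T, T', hdisj, hcover, hrow, hcol, rfl⟩
    have hcol' := Finset.disjoint_right.1 hdisj hcol
    have hrow' := Finset.disjoint_left.1 hdisj hrow
    refine ⟨chaosPart Z hk T, chaosPart Z hk T', chaosPart_disjoint Z hk hdisj,
      by rw [← chaosPart_union, hcover, chaosPart_univ], ?_⟩
    exact specNorm_flattenG_congr (by simp [biUnion_interSrc, hrow, hcol'])
      (by simp [biUnion_interSrc, hrow', hcol])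
  · rintro ⟨R', C', hdisj, hcover, rfl⟩
    have hR' : R' ⊆ Z := hcover ▸ Finset.subset_union_left
    have hC' : C' ⊆ Z := hcover ▸ Finset.subset_union_right
    refine ⟨insert ⟨k, by omega⟩ (chaosLift Z hk R'), insert ⟨k + 1, by omega⟩ (chaosLift Z hk C'),
      ?_, ?_, Finset.mem_insert_self _ _, Finset.mem_insert_self _ _, ?_⟩
    · simp [Finset.disjoint_insert_left, Finset.disjoint_insert_right,
        chaosLift_disjoint Z hk hdisj]
    · exact insert_chaosLift_union_insert_chaosLift Z hk hcover
    · exact specNorm_flattenG_congr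
        (by simp [biUnion_interSrc, chaosPart_chaosLift Z hk hR'])
        (by simp [biUnion_interSrc, chaosPart_chaosLift Z hk hC'])

include hZq in
theorem vP_interTensor :
    vP (interKappa m d1 d2 R C k) (interTensor m d1 d2 𝒜 Z R C hk) =
      sSup {x : ℝ | ∃ R' C' : Finset (Fin (q + 2)), Disjoint R' C' ∧ R' ∪ C' = Z ∧
        R'.Nonempty ∧
        x = specNorm (flattenG (fun t => Fin (cdim q m d1 d2 t)) 𝒜 R' (R ∪ C ∪ C'))} := by
  unfold vP
  congr 1
  ext x
  simp only [specNorm_flattenG_interTensor m d1 d2 Z R C hk hZq]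
  constructor
  · rintro ⟨T, T', hdisj, hcover, hrow, hcol, hne, rfl⟩
    have hrow' := Finset.disjoint_right.1 hdisj hrow
    have hcol' := Finset.disjoint_right.1 hdisj hcol
    refine ⟨chaosPart Z hk T, chaosPart Z hk T', chaosPart_disjoint Z hk hdisj,
      by rw [← chaosPart_union, hcover, chaosPart_univ],
      chaosPart_nonempty Z hk hne hrow' hcol', ?_⟩
    exact specNorm_flattenG_congr (by simp [biUnion_interSrc, hrow', hcol'])
      (by simp [biUnion_interSrc, hrow, hcol])
  · rintro ⟨R', C', hdisj, hcover, hne, rfl⟩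
    have hR' : R' ⊆ Z := hcover ▸ Finset.subset_union_left
    have hC' : C' ⊆ Z := hcover ▸ Finset.subset_union_right
    refine ⟨chaosLift Z hk R', insert ⟨k, by omega⟩ (insert ⟨k + 1, by omega⟩ (chaosLift Z hk C')),
      ?_, ?_, by simp, by simp, chaosLift_nonempty Z hk hR' hne, ?_⟩
    · simp [Finset.disjoint_insert_right, chaosLift_disjoint Z hk hdisj]
    · refine eq_univ_of_chaosLift_subset Z hk hcover.ge ?_ (by simp) (by simp)
      rw [chaosLift_union]
      exact Finset.union_subset_union le_rfl
        ((Finset.subset_insert _ _).trans (Finset.subset_insert _ _))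
    · exact specNorm_flattenG_congr
        (by simp [biUnion_interSrc, chaosPart_chaosLift Z hk hR'])
        (by simp [biUnion_interSrc, chaosPart_chaosLift Z hk hC'])

include hZq in
theorem rP_interTensor :
    rP (interKappa m d1 d2 R C k) (interTensor m d1 d2 𝒜 Z R C hk) =
      sSup {x : ℝ | ∃ R' C' : Finset (Fin (q + 2)), R' ∪ C' = Z ∧ (R' ∩ C').Nonempty ∧
        x = specNorm (flattenG (fun t => Fin (cdim q m d1 d2 t)) 𝒜 (R ∪ R') (C ∪ C'))} := by
  unfold rP
  congr 1
  ext x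
  simp only [specNorm_flattenG_interTensor m d1 d2 Z R C hk hZq]
  constructor
  · rintro ⟨T, T', hcover, hrow, hcol, hne, hlt, rfl⟩
    have hrow' : ⟨k, by omega⟩ ∉ T' := fun h => (hlt _ (Finset.mem_inter.2 ⟨hrow, h⟩)).false
    have hcol' : ⟨k + 1, by omega⟩ ∉ T := fun h =>
      (hlt _ (Finset.mem_inter.2 ⟨h, hcol⟩)).not_gt (Nat.lt_succ_self k)
    refine ⟨chaosPart Z hk T, chaosPart Z hk T', by rw [← chaosPart_union, hcover, chaosPart_univ],
      ?_, ?_⟩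
    · rw [← chaosPart_inter]
      exact chaosPart_nonempty Z hk hne (fun h => hrow' (Finset.mem_inter.1 h).2)
        (fun h => hcol' (Finset.mem_inter.1 h).1)
    · exact specNorm_flattenG_congr (by simp [biUnion_interSrc, hrow, hcol'])
        (by simp [biUnion_interSrc, hrow', hcol])
  · rintro ⟨R', C', hcover, hne, rfl⟩
    have hR' : R' ⊆ Z := hcover ▸ Finset.subset_union_left
    have hC' : C' ⊆ Z := hcover ▸ Finset.subset_union_right
    refine ⟨insert ⟨k, by omega⟩ (chaosLift Z hk R'), insert ⟨k + 1, by omega⟩ (chaosLift Z hk C'),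
      insert_chaosLift_union_insert_chaosLift Z hk hcover, Finset.mem_insert_self _ _,
      Finset.mem_insert_self _ _, ?_, ?_, ?_⟩
    · refine (chaosLift_nonempty Z hk (Finset.inter_subset_left.trans hR') hne).mono ?_
      rw [chaosLift_inter]
      exact Finset.inter_subset_inter (Finset.subset_insert _ _) (Finset.subset_insert _ _)
    · intro t ht
      obtain ⟨htR, htC⟩ := Finset.mem_inter.1 ht
      rcases Finset.mem_insert.1 htR with rfl | htR
      · simp at htC
      · exact lt_of_mem_chaosLift Z hk htR
    · exact specNorm_flattenG_congr
        (by simp [biUnion_interSrc, chaosPart_chaosLift Z hk hR'])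
        (by simp [biUnion_interSrc, chaosPart_chaosLift Z hk hC'])

end IntermediateParameters

theorem intermediate_flattening_params_general (q m d1 d2 : ℕ)
    (A : (Fin q → Fin m) → Matrix (Fin d1) (Fin d2) ℝ)
    (Z R C : Finset (Fin (q + 2))) (hZq : ∀ t ∈ Z, (t : ℕ) < q)
    (k : ℕ) (hk : Z.card = k) :
    (sigmaP (interKappa m d1 d2 R C k) (interTensor m d1 d2 (coeffTensor A) Z R C hk) =
      sSup {x : ℝ | ∃ R' C' : Finset (Fin (q + 2)), Disjoint R' C' ∧ R' ∪ C' = Z ∧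
        x = specNorm (flattenG (fun t => Fin (cdim q m d1 d2 t)) (coeffTensor A)
          (R ∪ R') (C ∪ C'))}) ∧
    (vP (interKappa m d1 d2 R C k) (interTensor m d1 d2 (coeffTensor A) Z R C hk) =
      sSup {x : ℝ | ∃ R' C' : Finset (Fin (q + 2)), Disjoint R' C' ∧ R' ∪ C' = Z ∧
        R'.Nonempty ∧
        x = specNorm (flattenG (fun t => Fin (cdim q m d1 d2 t)) (coeffTensor A)
          R' (R ∪ C ∪ C'))}) ∧
    (rP (interKappa m d1 d2 R C k) (interTensor m d1 d2 (coeffTensor A) Z R C hk) =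
      sSup {x : ℝ | ∃ R' C' : Finset (Fin (q + 2)), R' ∪ C' = Z ∧ (R' ∩ C').Nonempty ∧
        x = specNorm (flattenG (fun t => Fin (cdim q m d1 d2 t)) (coeffTensor A)
          (R ∪ R') (C ∪ C'))}) :=
  ⟨sigmaP_interTensor m d1 d2 Z R C hk hZq _, vP_interTensor m d1 d2 Z R C hk hZq _,
    rP_interTensor m d1 d2 Z R C hk hZq _⟩

/-- chaos parameters of intermediate flattenings. -/
theorem intermediate_flattening_params (q m d1 d2 : ℕ) (hq : 0 < q) (hm : 0 < m)
    (hd1 : 0 < d1) (hd2 : 0 < d2)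
    (A : (Fin q → Fin m) → Matrix (Fin d1) (Fin d2) ℝ)
    (Z R C : Finset (Fin (q + 2))) (hZq : ∀ t ∈ Z, (t : ℕ) < q) (hZne : Z.Nonempty)
    (hdisj : Disjoint Z (R ∪ C)) (k : ℕ) (hk : Z.card = k) :
    (sigmaP (interKappa m d1 d2 R C k) (interTensor m d1 d2 (coeffTensor A) Z R C hk) =
      sSup {x : ℝ | ∃ R' C' : Finset (Fin (q + 2)), Disjoint R' C' ∧ R' ∪ C' = Z ∧
        x = specNorm (flattenG (fun t => Fin (cdim q m d1 d2 t)) (coeffTensor A)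
          (R ∪ R') (C ∪ C'))}) ∧
    (vP (interKappa m d1 d2 R C k) (interTensor m d1 d2 (coeffTensor A) Z R C hk) =
      sSup {x : ℝ | ∃ R' C' : Finset (Fin (q + 2)), Disjoint R' C' ∧ R' ∪ C' = Z ∧
        R'.Nonempty ∧
        x = specNorm (flattenG (fun t => Fin (cdim q m d1 d2 t)) (coeffTensor A)
          R' (R ∪ C ∪ C'))}) ∧
    (rP (interKappa m d1 d2 R C k) (interTensor m d1 d2 (coeffTensor A) Z R C hk) =
      sSup {x : ℝ | ∃ R' C' : Finset (Fin (q + 2)), R' ∪ C' = Z ∧ (R' ∩ C').Nonempty ∧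
        x = specNorm (flattenG (fun t => Fin (cdim q m d1 d2 t)) (coeffTensor A)
          (R ∪ R') (C ∪ C'))}) :=
  intermediate_flattening_params_general q m d1 d2 A Z R C hZq k hk

end
end

section
/- For every coefficient tensor 𝒜 of a decoupled matrix chaos of order q, one has r(𝒜) ≤ σ(𝒜) and r(𝒜) ≤ v(𝒜). -/
open MeasureTheory ProbabilityTheory Finset
open scoped ENNReal

noncomputable section

/-!
Write `S = R ∩ C` for an r-flattening `𝒜^{R→C}`. Its `(r, c)` entry vanishes unless `r` and `c`
agree on `S`, so the matrix is block diagonal, with one block for each value `s` of the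
coordinates in `S`, and its norm is the largest norm of a block. Dropping the coordinates of `S`
from the column index embeds block `s` as a submatrix of the σ-flattening `𝒜^{R→C∖R}`. The
entries of block `s` are distinct entries of row `s` of the v-flattening `𝒜^{S→Sᶜ}`, so the norm
of the block is at most its Frobenius norm, hence at most the length of that row, hence at most
`‖𝒜^{S→Sᶜ}‖`. The condition `R ∩ C ⊆ [q]` makes `(R, C∖R)` a σ-partition and `(S, Sᶜ)` a
v-partition.
-/

open Function

lemma Fintype.sum_comp_le_sum_of_injective {ι κ M : Type*} [Fintype ι] [Fintype κ]
    [AddCommMonoid M] [PartialOrder M] [IsOrderedAddMonoid M] {e : ι → κ}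
    (he : Injective e) {f : κ → M} (hf : 0 ≤ f) : ∑ i, f (e i) ≤ ∑ j, f j :=
  calc ∑ i, f (e i) = ∑ j ∈ Finset.univ.map ⟨e, he⟩, f j :=
      (Finset.sum_map Finset.univ ⟨e, he⟩ f).symm
    _ ≤ ∑ j, f j := Finset.sum_le_univ_sum_of_nonneg hf

lemma Real.sSup_le_sSup_of_forall_exists_le {s t : Set ℝ} (ht : BddAbove t)
    (ht₀ : ∀ y ∈ t, 0 ≤ y) (h : ∀ x ∈ s, ∃ y ∈ t, x ≤ y) : sSup s ≤ sSup t := by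
  rcases s.eq_empty_or_nonempty with rfl | hs
  · exact Real.sSup_empty ▸ Real.sSup_nonneg ht₀
  · exact csSup_le hs fun x hx =>
      let ⟨_, hy, hxy⟩ := h x hx
      le_csSup_of_le ht hy hxy

namespace Matrix

variable {α β : Type*} [Fintype α] [Fintype β] [DecidableEq β]

lemma specNorm_nonneg (M : Matrix α β ℝ) : 0 ≤ specNorm M := norm_nonneg _

lemma sum_sq_mulVec_le (M : Matrix α β ℝ) (v : β → ℝ) :
    ∑ i, (M *ᵥ v) i ^ 2 ≤ specNorm M ^ 2 * ∑ j, v j ^ 2 := by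
  have h := (LinearMap.toContinuousLinearMap (toEuclideanLin M)).le_opNorm (WithLp.toLp 2 v)
  have hMv : ‖LinearMap.toContinuousLinearMap (toEuclideanLin M) (WithLp.toLp 2 v)‖ ^ 2 =
      ∑ i, (M *ᵥ v) i ^ 2 := EuclideanSpace.real_norm_sq_eq _
  have hv : ‖(WithLp.toLp 2 v : EuclideanSpace ℝ β)‖ ^ 2 = ∑ j, v j ^ 2 :=
    EuclideanSpace.real_norm_sq_eq _
  rw [← hMv, ← hv, ← mul_pow]
  exact pow_le_pow_left₀ (norm_nonneg _) h 2

lemma specNorm_le_of_sum_sq_mulVec_le (M : Matrix α β ℝ) {K : ℝ} (hK : 0 ≤ K)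
    (h : ∀ v, ∑ i, (M *ᵥ v) i ^ 2 ≤ K ^ 2 * ∑ j, v j ^ 2) : specNorm M ≤ K := by
  refine ContinuousLinearMap.opNorm_le_bound _ hK fun x => ?_
  refine (pow_le_pow_iff_left₀ (norm_nonneg _) (by positivity) two_ne_zero).mp ?_
  have hMx : ‖LinearMap.toContinuousLinearMap (toEuclideanLin M) x‖ ^ 2 =
      ∑ i, (M *ᵥ x.ofLp) i ^ 2 := EuclideanSpace.real_norm_sq_eq _
  have hx : ‖x‖ ^ 2 = ∑ j, x.ofLp j ^ 2 := EuclideanSpace.real_norm_sq_eq x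
  rw [mul_pow, hMx, hx]
  exact h x.ofLp

lemma sum_sq_row_le (M : Matrix α β ℝ) (i : α) : ∑ j, M i j ^ 2 ≤ specNorm M ^ 2 := by
  set L := ∑ j, M i j ^ 2
  have hL : (M *ᵥ M i) i = L := by simp only [mulVec, dotProduct, L, sq]
  have h : L * L ≤ specNorm M ^ 2 * L := calc
    L * L = (M *ᵥ M i) i ^ 2 := by rw [hL, sq]
    _ ≤ ∑ i', (M *ᵥ M i) i' ^ 2 :=
      Finset.single_le_sum (fun i' _ => sq_nonneg ((M *ᵥ M i) i')) (Finset.mem_univ i)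
    _ ≤ specNorm M ^ 2 * L := sum_sq_mulVec_le M (M i)
  have hL0 : 0 ≤ L := Finset.sum_nonneg fun j _ => sq_nonneg (M i j)
  rcases hL0.eq_or_lt with hL0 | hL0
  · rw [← hL0]; positivity
  · exact le_of_mul_le_mul_right h hL0

lemma specNorm_le_sqrt_sum_sq (M : Matrix α β ℝ) :
    specNorm M ≤ √(∑ i, ∑ j, M i j ^ 2) := by
  refine specNorm_le_of_sum_sq_mulVec_le M (Real.sqrt_nonneg _) fun v => ?_
  rw [Real.sq_sqrt (by positivity), Finset.sum_mul]
  exact Finset.sum_le_sum fun i _ => Finset.sum_mul_sq_le_sq_mul_sq _ _ _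

lemma specNorm_submatrix_le {α' β' : Type*} [Fintype α'] [Fintype β'] [DecidableEq β']
    (M : Matrix α β ℝ) {e₁ : α' → α} {e₂ : β' → β} (he₁ : Injective e₁) (he₂ : Injective e₂) :
    specNorm (M.submatrix e₁ e₂) ≤ specNorm M := by
  refine specNorm_le_of_sum_sq_mulVec_le _ (specNorm_nonneg M) fun v => ?_
  set w : β → ℝ := extend e₂ v 0
  have hw : ∀ j, w (e₂ j) = v j := he₂.extend_apply v 0
  have hw0 : ∀ j ∉ Set.range e₂, w j = 0 := fun j hj => by
    simp only [w, extend_apply' _ _ _ fun ⟨k, hk⟩ => hj ⟨k, hk⟩, Pi.zero_apply]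
  have hMw : ∀ i, (M.submatrix e₁ e₂ *ᵥ v) i = (M *ᵥ w) (e₁ i) := fun i =>
    Fintype.sum_of_injective e₂ he₂ _ _ (fun j hj => by simp [hw0 j hj]) fun j => by
      simp [hw]
  have hv : ∑ j, w j ^ 2 = ∑ j, v j ^ 2 :=
    (Fintype.sum_of_injective e₂ he₂ _ _ (fun j hj => by simp [hw0 j hj]) fun j => by
      rw [hw]).symm
  calc ∑ i, (M.submatrix e₁ e₂ *ᵥ v) i ^ 2 = ∑ i, (M *ᵥ w) (e₁ i) ^ 2 := by simp_rw [hMw]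
    _ ≤ ∑ a, (M *ᵥ w) a ^ 2 :=
      Fintype.sum_comp_le_sum_of_injective he₁ fun _ => sq_nonneg _
    _ ≤ specNorm M ^ 2 * ∑ j, v j ^ 2 := hv ▸ sum_sq_mulVec_le M w

lemma specNorm_le_of_injective_reshape {γ δ : Type*} [Fintype γ] [Fintype δ] [DecidableEq δ]
    (M : Matrix α β ℝ) (N : Matrix γ δ ℝ) (x : γ) {e : α × β → δ} (he : Injective e)
    (hM : ∀ a b, M a b = N x (e (a, b))) : specNorm M ≤ specNorm N :=
  calc specNorm M ≤ √(∑ a, ∑ b, M a b ^ 2) := specNorm_le_sqrt_sum_sq M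
    _ ≤ √(∑ u, N x u ^ 2) := by
      refine Real.sqrt_le_sqrt ?_
      simp_rw [hM, ← Fintype.sum_prod_type']
      exact Fintype.sum_comp_le_sum_of_injective he fun _ => sq_nonneg _
    _ ≤ specNorm N :=
      (Real.sqrt_le_sqrt (sum_sq_row_le N x)).trans_eq (Real.sqrt_sq (specNorm_nonneg N))

lemma specNorm_le_of_blocks {σ : Type*} [Fintype σ] [DecidableEq σ] (M : Matrix α β ℝ)
    (f : α → σ) (g : β → σ) (hM : ∀ i j, f i ≠ g j → M i j = 0) {K : ℝ} (hK : 0 ≤ K)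
    (hblock : ∀ s, specNorm (M.submatrix (Subtype.val : {i // f i = s} → α)
      (Subtype.val : {j // g j = s} → β)) ≤ K) :
    specNorm M ≤ K := by
  refine specNorm_le_of_sum_sq_mulVec_le M hK fun v => ?_
  have hrow : ∀ i, (M *ᵥ v) i = (M.submatrix (Subtype.val : {i' // f i' = f i} → α)
      (Subtype.val : {j // g j = f i} → β) *ᵥ fun j => v j) ⟨i, rfl⟩ := fun i => by
    simp only [mulVec, dotProduct, submatrix_apply]
    rw [← Fintype.sum_subtype_add_sum_subtype (fun j => g j = f i), add_eq_left]
    exact Finset.sum_eq_zero fun j _ => by rw [hM i j (Ne.symm j.2), zero_mul]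
  calc ∑ i, (M *ᵥ v) i ^ 2 = ∑ s, ∑ i : {i // f i = s}, (M *ᵥ v) i ^ 2 :=
        (Fintype.sum_fiberwise f _).symm
    _ ≤ ∑ s, K ^ 2 * ∑ j : {j // g j = s}, v j ^ 2 := by
        refine Finset.sum_le_sum fun s _ => ?_
        set B := M.submatrix (Subtype.val : {i // f i = s} → α) (Subtype.val : {j // g j = s} → β)
        calc ∑ i : {i // f i = s}, (M *ᵥ v) i ^ 2 = ∑ i, (B *ᵥ fun j => v j) i ^ 2 :=
              Finset.sum_congr rfl fun ⟨i, hi⟩ _ => by subst hi; rw [hrow]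
          _ ≤ specNorm B ^ 2 * ∑ j : {j // g j = s}, v j ^ 2 := sum_sq_mulVec_le B _
          _ ≤ K ^ 2 * ∑ j : {j // g j = s}, v j ^ 2 := by
              gcongr
              · exact specNorm_nonneg B
              · exact hblock s
    _ = K ^ 2 * ∑ j, v j ^ 2 := by rw [← Finset.mul_sum, Fintype.sum_fiberwise g fun j => v j ^ 2]

end Matrix

section Flattening

variable {n : ℕ} {κ : Fin n → Type} {R C : Finset (Fin n)}

def glue (hu : R ∪ C = univ) (r : ∀ t : R, κ t) (c : ∀ t : C, κ t) (t : Fin n) : κ t :=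
  if h : t ∈ R then r ⟨t, h⟩ else c ⟨t, (mem_union.1 (hu ▸ mem_univ t)).resolve_left h⟩

lemma restrict_glue_left (hu : R ∪ C = univ) (r : ∀ t : R, κ t) (c : ∀ t : C, κ t) :
    R.restrict (glue hu r c) = r :=
  funext fun t => dif_pos t.2

lemma restrict_glue_right (hu : R ∪ C = univ) {r : ∀ t : R, κ t} {c : ∀ t : C, κ t}
    (hrc : restrict₂ inter_subset_left r = restrict₂ inter_subset_right c) :
    C.restrict (glue hu r c) = c := by
  funext t
  by_cases h : t.1 ∈ R
  · exact (dif_pos h).trans (congrFun hrc ⟨t, mem_inter.2 ⟨h, t.2⟩⟩)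
  · exact dif_neg h

lemma eq_glue_of_restrict (hu : R ∪ C = univ) {i : ∀ t, κ t} {r : ∀ t : R, κ t}
    {c : ∀ t : C, κ t} (hr : R.restrict i = r) (hc : C.restrict i = c) : i = glue hu r c := by
  funext t
  by_cases h : t ∈ R
  · rw [glue, dif_pos h, ← hr, restrict]
  · rw [glue, dif_neg h, ← hc, restrict]

variable [∀ t, Fintype (κ t)] [∀ t, DecidableEq (κ t)] (𝒜 : (∀ t, κ t) → ℝ)

lemma flattenG_apply_of_agree (hu : R ∪ C = univ) {r : ∀ t : R, κ t} {c : ∀ t : C, κ t}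
    (hrc : restrict₂ inter_subset_left r = restrict₂ inter_subset_right c) :
    flattenG κ 𝒜 R C r c = 𝒜 (glue hu r c) := by
  rw [flattenG, Matrix.of_apply, Finset.sum_eq_single (glue hu r c)]
  · rw [if_pos ⟨congrFun (restrict_glue_left hu r c), congrFun (restrict_glue_right hu hrc)⟩]
  · exact fun i _ hi => if_neg fun ⟨hr, hc⟩ => hi (eq_glue_of_restrict hu (funext hr) (funext hc))
  · exact fun h => absurd (mem_univ _) h

lemma flattenG_apply_of_not_agree {r : ∀ t : R, κ t} {c : ∀ t : C, κ t}
    (hrc : restrict₂ inter_subset_left r ≠ restrict₂ inter_subset_right c) :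
    flattenG κ 𝒜 R C r c = 0 :=
  Finset.sum_eq_zero fun _ _ =>
    if_neg fun ⟨hr, hc⟩ => hrc (funext fun t => (hr ⟨t, _⟩).symm.trans (hc ⟨t, _⟩))

lemma specNorm_flattenG_le_sdiff (hu : R ∪ C = univ) :
    specNorm (flattenG κ 𝒜 R C) ≤ specNorm (flattenG κ 𝒜 R (C \ R)) := by
  have hu' : R ∪ C \ R = univ := by rwa [union_sdiff_self_eq_union]
  refine Matrix.specNorm_le_of_blocks _ (restrict₂ inter_subset_left)
    (restrict₂ inter_subset_right) (fun _ _ => flattenG_apply_of_not_agree 𝒜)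
    (Matrix.specNorm_nonneg _) fun s => ?_
  have hinj : Injective
      fun c : {c : ∀ t : C, κ t // restrict₂ (inter_subset_right (s₁ := R)) c = s} =>
        restrict₂ (sdiff_subset : C \ R ⊆ C) c.1 := fun ⟨c₁, h₁⟩ ⟨c₂, h₂⟩ h => by
    refine Subtype.ext (funext fun t => ?_)
    by_cases htR : t.1 ∈ R
    · exact congrFun (h₁.trans h₂.symm) ⟨t, mem_inter.2 ⟨htR, t.2⟩⟩
    · exact congrFun h ⟨t, mem_sdiff.2 ⟨t.2, htR⟩⟩
  convert Matrix.specNorm_submatrix_le _ (Subtype.val_injective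
    (p := fun r : ∀ t : R, κ t => restrict₂ (inter_subset_left (s₂ := C)) r = s)) hinj using 2
  ext ⟨r, hr⟩ ⟨c, hc⟩
  have hdisj : restrict₂ (inter_subset_left (s₂ := C \ R)) r =
      restrict₂ inter_subset_right (restrict₂ sdiff_subset c) :=
    funext fun t => absurd (mem_inter.1 t.2).1 (mem_sdiff.1 (mem_inter.1 t.2).2).2
  simp only [Matrix.submatrix_apply]
  rw [flattenG_apply_of_agree 𝒜 hu (hr.trans hc.symm), flattenG_apply_of_agree 𝒜 hu' hdisj]
  rfl

lemma specNorm_flattenG_le_inter_compl (hu : R ∪ C = univ) :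
    specNorm (flattenG κ 𝒜 R C) ≤ specNorm (flattenG κ 𝒜 (R ∩ C) (R ∩ C)ᶜ) := by
  set S := R ∩ C
  refine Matrix.specNorm_le_of_blocks _ (restrict₂ inter_subset_left)
    (restrict₂ inter_subset_right) (fun _ _ => flattenG_apply_of_not_agree 𝒜)
    (Matrix.specNorm_nonneg _) fun s => ?_
  have hglue : ∀ p : {r // restrict₂ inter_subset_left r = s} ×
      {c // restrict₂ inter_subset_right c = s},
      glue hu p.1.1 p.2.1 = glue S.union_compl s (Sᶜ.restrict (glue hu p.1.1 p.2.1)) :=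
    fun ⟨⟨r, hr⟩, _⟩ => eq_glue_of_restrict _
      ((congrArg (restrict₂ inter_subset_left) (restrict_glue_left hu r _)).trans hr) rfl
  refine Matrix.specNorm_le_of_injective_reshape _ _ s
    (e := fun p => Sᶜ.restrict (glue hu p.1.1 p.2.1)) ?_ ?_
  · rintro ⟨⟨r, hr⟩, ⟨c, hc⟩⟩ ⟨⟨r', hr'⟩, ⟨c', hc'⟩⟩ h
    have hg : glue hu r c = glue hu r' c' := by
      rw [hglue ⟨⟨r, hr⟩, ⟨c, hc⟩⟩, hglue ⟨⟨r', hr'⟩, ⟨c', hc'⟩⟩]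
      exact congrArg _ h
    refine Prod.ext (Subtype.ext ?_) (Subtype.ext ?_)
    · exact (restrict_glue_left hu r c).symm.trans
        ((congrArg R.restrict hg).trans (restrict_glue_left hu r' c'))
    · exact (restrict_glue_right hu (hr.trans hc.symm)).symm.trans
        ((congrArg C.restrict hg).trans (restrict_glue_right hu (hr'.trans hc'.symm)))
  · rintro ⟨r, hr⟩ ⟨c, hc⟩
    have hdisj : restrict₂ inter_subset_left s =
        restrict₂ inter_subset_right (Sᶜ.restrict (glue hu r c)) :=
      funext fun t => absurd (mem_inter.1 t.2).1 (mem_compl.1 (mem_inter.1 t.2).2)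
    rw [Matrix.submatrix_apply, flattenG_apply_of_agree 𝒜 hu (hr.trans hc.symm),
      flattenG_apply_of_agree 𝒜 S.union_compl hdisj, ← hglue ⟨⟨r, hr⟩, ⟨c, hc⟩⟩]

lemma sSup_le_sSup_of_forall_exists_le_specNorm_flattenG {s t : Set ℝ}
    (ht : ∀ y ∈ t, ∃ R C, y = specNorm (flattenG κ 𝒜 R C)) (h : ∀ x ∈ s, ∃ y ∈ t, x ≤ y) :
    sSup s ≤ sSup t := by
  refine Real.sSup_le_sSup_of_forall_exists_le ?_ (fun y hy => ?_) h
  · refine (Set.finite_range fun p : Finset (Fin n) × Finset (Fin n) =>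
      specNorm (flattenG κ 𝒜 p.1 p.2)).bddAbove.mono fun y hy => ?_
    obtain ⟨R, C, rfl⟩ := ht y hy
    exact ⟨(R, C), rfl⟩
  · obtain ⟨R, C, rfl⟩ := ht y hy
    exact Matrix.specNorm_nonneg _

end Flattening

section Parameters

variable {k : ℕ} (κ : Fin (k + 2) → Type) [∀ t, Fintype (κ t)] [∀ t, DecidableEq (κ t)]
  (𝒜 : (∀ t, κ t) → ℝ)

theorem rP_le_sigmaP : rP κ 𝒜 ≤ sigmaP κ 𝒜 := by
  refine sSup_le_sSup_of_forall_exists_le_specNorm_flattenG 𝒜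
    (fun _ ⟨R, C, _, _, _, _, hx⟩ => ⟨R, C, hx⟩) ?_
  rintro _ ⟨R, C, hu, hkR, hkC, -, hlt, rfl⟩
  have hkR' : (⟨k + 1, by omega⟩ : Fin (k + 2)) ∉ R := fun h => by
    simpa using hlt _ (mem_inter.2 ⟨h, hkC⟩)
  exact ⟨_, ⟨R, C \ R, disjoint_sdiff, by rwa [union_sdiff_self_eq_union], hkR,
    mem_sdiff.2 ⟨hkC, hkR'⟩, rfl⟩, specNorm_flattenG_le_sdiff 𝒜 hu⟩

theorem rP_le_vP : rP κ 𝒜 ≤ vP κ 𝒜 := by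
  refine sSup_le_sSup_of_forall_exists_le_specNorm_flattenG 𝒜
    (fun _ ⟨R, C, _, _, _, _, _, hx⟩ => ⟨R, C, hx⟩) ?_
  rintro _ ⟨R, C, hu, -, -, hne, hlt, rfl⟩
  exact ⟨_, ⟨R ∩ C, (R ∩ C)ᶜ, disjoint_compl_right, union_compl _,
    mem_compl.2 fun h => by simpa using hlt _ h, mem_compl.2 fun h => by simpa using hlt _ h,
    hne, rfl⟩, specNorm_flattenG_le_inter_compl 𝒜 hu⟩

end Parameters

theorem r_le_sigma_and_v_general (q m d1 d2 : ℕ) (𝒜 : (∀ t : Fin (q + 2), Fin (cdim q m d1 d2 t)) → ℝ) :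
    rP (fun t => Fin (cdim q m d1 d2 t)) 𝒜 ≤ sigmaP (fun t => Fin (cdim q m d1 d2 t)) 𝒜 ∧
    rP (fun t => Fin (cdim q m d1 d2 t)) 𝒜 ≤ vP (fun t => Fin (cdim q m d1 d2 t)) 𝒜 :=
  ⟨rP_le_sigmaP _ 𝒜, rP_le_vP _ 𝒜⟩

/-- `r(𝒜) ≤ σ(𝒜)` and `r(𝒜) ≤ v(𝒜)`. -/
theorem r_le_sigma_and_v (q m d1 d2 : ℕ) (hq : 0 < q) (hm : 0 < m) (hd1 : 0 < d1)
    (hd2 : 0 < d2) (𝒜 : (∀ t : Fin (q + 2), Fin (cdim q m d1 d2 t)) → ℝ) :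
    rP (fun t => Fin (cdim q m d1 d2 t)) 𝒜 ≤ sigmaP (fun t => Fin (cdim q m d1 d2 t)) 𝒜 ∧
    rP (fun t => Fin (cdim q m d1 d2 t)) 𝒜 ≤ vP (fun t => Fin (cdim q m d1 d2 t)) 𝒜 :=
  r_le_sigma_and_v_general q m d1 d2 𝒜

end
end
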